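/- arXiv:2407.07542 — 16 statements merged into one kernel-verified Lean document; each statement's English description precedes it below -/
import Mathlib

section
/- Let (M,d) be a metric space with at least four points and let T : M → M be a perimetric contraction on quadrilaterals. Then T is continuous on M. -/
theorem perimetric_contraction_quadrilaterals_continuous
    {M : Type*} [MetricSpace M] (T : M → M)
    (hfour : ∃ a b c e : M, a ≠ b ∧ a ≠ c ∧ a ≠ e ∧ b ≠ c ∧ b ≠ e ∧ c ≠ e)
    (hT : ∃ α : ℝ, 0 ≤ α ∧ α < 1 ∧ ∀ p q r s : M, p ≠ q → p ≠ r → p ≠ s → q ≠ r → q ≠ s → r ≠ s →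
      dist (T p) (T q) + dist (T q) (T r) + dist (T r) (T s) + dist (T s) (T p) ≤
        α * (dist p q + dist q r + dist r s + dist s p)) :
    Continuous T := by
  obtain ⟨α, hα0, hα1, hcon⟩ := hT
  rw [Metric.continuous_iff]
  intro x ε hε
  by_cases hiso : ∃ δ > 0, ∀ y : M, dist y x < δ → y = x
  · obtain ⟨δ, hδ, h⟩ := hiso
    exact ⟨δ, hδ, fun y hy => by rw [h y hy]; simpa using hε⟩
  · push_neg at hiso
    refine ⟨ε / 6, by positivity, fun y hy => ?_⟩
    by_cases hxy : y = x
    · simpa [hxy] using hε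
    · have key : ∀ r s : M, r ≠ x → r ≠ y → s ≠ x → s ≠ y → r ≠ s →
          dist r x < ε / 6 → dist s x < ε / 6 → dist (T y) (T x) < ε := by
        intro r s hrx hry hsx hsy hrs hrd hsd
        have h := hcon x y r s (Ne.symm hxy) (Ne.symm hrx) (Ne.symm hsx)
          (Ne.symm hry) (Ne.symm hsy) hrs
        have hsum : dist x y + dist y r + dist r s + dist s x < ε := by
          have t1 : dist y r ≤ dist y x + dist x r := dist_triangle y x r
          have t2 : dist r s ≤ dist r x + dist x s := dist_triangle r x s
          have e1 : dist x r = dist r x := dist_comm x r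
          have e2 : dist x s = dist s x := dist_comm x s
          have e3 : dist x y = dist y x := dist_comm x y
          linarith
        have hnn : (0:ℝ) ≤ dist x y + dist y r + dist r s + dist s x := by positivity
        have h1 : dist (T x) (T y) ≤
            dist (T x) (T y) + dist (T y) (T r) + dist (T r) (T s) + dist (T s) (T x) := by
          have := dist_nonneg (x := T y) (y := T r)
          have := dist_nonneg (x := T r) (y := T s)
          have := dist_nonneg (x := T s) (y := T x)
          linarith
        have h2 : α * (dist x y + dist y r + dist r s + dist s x) ≤
            dist x y + dist y r + dist r s + dist s x := by nlinarith
        rw [dist_comm]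
        linarith
      obtain ⟨z1, hz1d, hz1⟩ := hiso (ε / 6) (by positivity)
      obtain ⟨z2, hz2d, hz2⟩ := hiso (dist z1 x) (dist_pos.2 hz1)
      obtain ⟨z3, hz3d, hz3⟩ := hiso (dist z2 x) (dist_pos.2 hz2)
      have h21 : z2 ≠ z1 := fun h => by rw [h] at hz2d; exact lt_irrefl _ hz2d
      have h32 : z3 ≠ z2 := fun h => by rw [h] at hz3d; exact lt_irrefl _ hz3d
      have h31 : z3 ≠ z1 := fun h => by rw [h] at hz3d; linarith
      have hz2d' : dist z2 x < ε / 6 := lt_trans hz2d hz1d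
      have hz3d' : dist z3 x < ε / 6 := lt_trans hz3d hz2d'
      by_cases h1y : z1 = y
      · exact key z2 z3 hz2 (h1y ▸ h21) hz3 (h1y ▸ h31) (Ne.symm h32) hz2d' hz3d'
      · by_cases h2y : z2 = y
        · exact key z1 z3 hz1 h1y hz3 (h2y ▸ h32) (Ne.symm h31) hz1d hz3d'
        · exact key z1 z2 hz1 h1y hz2 h2y (Ne.symm h21) hz1d hz2d'
end

section
/- Let (M,d) be a complete metric space with at least four points and let T : M → M be a perimetric contraction on quadrilaterals. If T has no periodic points of prime period 2 (i.e., T²m = m implies Tm = m for all m ∈ M) and no periodic points of prime period 3 (i.e., T³m = m implies Tm = m for all m ∈ M), then T has a fixed point in M. -/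
open Filter Topology

theorem perimetric_contraction_quadrilaterals_fixed_point
    {M : Type*} [MetricSpace M] [CompleteSpace M] (T : M → M)
    (hfour : ∃ a b c e : M, a ≠ b ∧ a ≠ c ∧ a ≠ e ∧ b ≠ c ∧ b ≠ e ∧ c ≠ e)
    (hT : ∃ α : ℝ, 0 ≤ α ∧ α < 1 ∧ ∀ p q r s : M, p ≠ q → p ≠ r → p ≠ s → q ≠ r → q ≠ s → r ≠ s →
      dist (T p) (T q) + dist (T q) (T r) + dist (T r) (T s) + dist (T s) (T p) ≤
        α * (dist p q + dist q r + dist r s + dist s p))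
    (h2 : ∀ m : M, T (T m) = m → T m = m)
    (h3 : ∀ m : M, T (T (T m)) = m → T m = m) :
    ∃ m : M, T m = m := by
  by_contra hfix
  push_neg at hfix
  obtain ⟨a, b, c, e, hab⟩ := hfour
  obtain ⟨α, hα0, hα1, hc⟩ := hT
  have hne1 : ∀ m : M, T m ≠ m := hfix
  have hne2 : ∀ m : M, T (T m) ≠ m := fun m h => hfix m (h2 m h)
  have hne3 : ∀ m : M, T (T (T m)) ≠ m := fun m h => hfix m (h3 m h)
  set x : ℕ → M := fun n => T^[n] a with hxdef
  have hshift : ∀ s t : ℕ, x (s + t) = T^[t] (x s) := by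
    intro s t
    simp only [hxdef]
    rw [Nat.add_comm, Function.iterate_add_apply]
  have hstep : ∀ n : ℕ, x (n + 1) = T (x n) := by
    intro n
    simp only [hxdef, Function.iterate_succ_apply']
  have hw1 : ∀ n : ℕ, x n ≠ x (n + 1) := by
    intro n
    rw [hstep n]
    exact (hne1 (x n)).symm
  have hw2 : ∀ n : ℕ, x n ≠ x (n + 2) := by
    intro n
    have h : x (n + 2) = T (T (x n)) := by
      rw [show n + 2 = n + 1 + 1 by omega, hstep, hstep]
    rw [h]
    exact (hne2 (x n)).symm
  have hw3 : ∀ n : ℕ, x n ≠ x (n + 3) := by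
    intro n
    have h : x (n + 3) = T (T (T (x n))) := by
      rw [show n + 3 = n + 1 + 1 + 1 by omega, hstep, hstep, hstep]
    rw [h]
    exact (hne3 (x n)).symm
  set P : ℕ → ℝ := fun n =>
    dist (x n) (x (n + 1)) + dist (x (n + 1)) (x (n + 2)) +
      dist (x (n + 2)) (x (n + 3)) + dist (x (n + 3)) (x n) with hPdef
  have hPc : ∀ n : ℕ, P (n + 1) ≤ α * P n := by
    intro n
    have h12 : x (n + 1) ≠ x (n + 2) := by
      have := hw1 (n + 1); rwa [show n + 1 + 1 = n + 2 by omega] at this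
    have h13 : x (n + 1) ≠ x (n + 3) := by
      have := hw2 (n + 1); rwa [show n + 1 + 2 = n + 3 by omega] at this
    have h23 : x (n + 2) ≠ x (n + 3) := by
      have := hw1 (n + 2); rwa [show n + 2 + 1 = n + 3 by omega] at this
    have h := hc (x n) (x (n + 1)) (x (n + 2)) (x (n + 3)) (hw1 n) (hw2 n) (hw3 n)
      h12 h13 h23
    rw [← hstep n, ← hstep (n + 1), ← hstep (n + 2), ← hstep (n + 3)] at h
    simp only [hPdef]
    simp only [show n + 1 + 1 = n + 2 by omega, show n + 2 + 1 = n + 3 by omega,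
      show n + 3 + 1 = n + 4 by omega, show n + 1 + 2 = n + 3 by omega,
      show n + 1 + 3 = n + 4 by omega] at h ⊢
    linarith
  have hPnonneg : ∀ n : ℕ, 0 ≤ P n := by
    intro n
    simp only [hPdef]
    have := dist_nonneg (x := x n) (y := x (n + 1))
    have := dist_nonneg (x := x (n + 1)) (y := x (n + 2))
    have := dist_nonneg (x := x (n + 2)) (y := x (n + 3))
    have := dist_nonneg (x := x (n + 3)) (y := x n)
    linarith
  have hPn : ∀ n : ℕ, P n ≤ α ^ n * P 0 := by
    intro n
    induction n with
    | zero => simp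
    | succ n ih =>
      calc P (n + 1) ≤ α * P n := hPc n
        _ ≤ α * (α ^ n * P 0) := mul_le_mul_of_nonneg_left ih hα0
        _ = α ^ (n + 1) * P 0 := by ring
  have hdistP : ∀ n : ℕ, dist (x n) (x (n + 1)) ≤ P n := by
    intro n
    simp only [hPdef]
    have := dist_nonneg (x := x (n + 1)) (y := x (n + 2))
    have := dist_nonneg (x := x (n + 2)) (y := x (n + 3))
    have := dist_nonneg (x := x (n + 3)) (y := x n)
    linarith
  have hCauchy : CauchySeq x := by
    apply cauchySeq_of_le_geometric α (P 0) hα1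
    intro n
    calc dist (x n) (x (n + 1)) ≤ P n := hdistP n
      _ ≤ α ^ n * P 0 := hPn n
      _ = P 0 * α ^ n := by ring
  obtain ⟨m, hm⟩ := cauchySeq_tendsto_of_complete hCauchy
  -- injectivity of the orbit
  have hkey : ∀ i j : ℕ, i < j → x i ≠ x j := by
    intro i j hij heq
    set k := j - i with hk
    have hk1 : 1 ≤ k := by omega
    have hik : i + k = j := by omega
    have hper : ∀ t : ℕ, x (i + t * k) = x i := by
      intro t
      induction t with
      | zero => simp
      | succ t ih =>
        have h1 : i + (t + 1) * k = (i + t * k) + k := by ring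
        rw [h1, hshift (i + t * k) k, ih, ← hshift i k, hik, ← heq]
    have hper1 : ∀ t : ℕ, x (i + t * k + 1) = x (i + 1) := by
      intro t
      rw [hstep, hper t, ← hstep]
    have hble : ∀ n : ℕ, dist (x i) (x (i + 1)) ≤ α ^ n * P 0 := by
      intro n
      have h1 : dist (x i) (x (i + 1)) = dist (x (i + n * k)) (x (i + n * k + 1)) := by
        rw [hper n, hper1 n]
      have h2 : n ≤ i + n * k := by nlinarith
      calc dist (x i) (x (i + 1)) = dist (x (i + n * k)) (x (i + n * k + 1)) := h1
        _ ≤ P (i + n * k) := hdistP _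
        _ ≤ α ^ (i + n * k) * P 0 := hPn _
        _ ≤ α ^ n * P 0 := by
            apply mul_le_mul_of_nonneg_right _ (hPnonneg 0)
            exact pow_le_pow_of_le_one hα0 hα1.le h2
    have htend : Tendsto (fun n : ℕ => α ^ n * P 0) atTop (𝓝 0) := by
      have := (tendsto_pow_atTop_nhds_zero_of_lt_one hα0 hα1).mul_const (P 0)
      simpa using this
    have hle0 : dist (x i) (x (i + 1)) ≤ 0 := ge_of_tendsto' htend hble
    have hpos : 0 < dist (x i) (x (i + 1)) := dist_pos.mpr (hw1 i)
    linarith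
  have hinj : ∀ i j : ℕ, x i = x j → i = j := by
    intro i j h
    rcases Nat.lt_trichotomy i j with h' | h' | h'
    · exact absurd h (hkey i j h')
    · exact h'
    · exact absurd h.symm (hkey j i h')
  have hev : ∀ c : M, ∀ᶠ n in atTop, x n ≠ c := by
    intro c
    by_cases h : ∃ n, x n = c
    · obtain ⟨n0, hn0⟩ := h
      filter_upwards [eventually_gt_atTop n0] with n hn hc'
      exact hn.ne' (hinj n n0 (hc'.trans hn0.symm))
    · push_neg at h
      exact Eventually.of_forall h
  -- derive the contradiction at the limit point
  have hmT : T m ≠ m := hfix m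
  have hx1 : Tendsto (fun n => x (n + 1)) atTop (𝓝 m) := hm.comp (tendsto_add_atTop_nat 1)
  have hx2 : Tendsto (fun n => x (n + 2)) atTop (𝓝 m) := hm.comp (tendsto_add_atTop_nat 2)
  have hev1m : ∀ᶠ n in atTop, x (n + 1) ≠ m := (tendsto_add_atTop_nat 1).eventually (hev m)
  have hev1T : ∀ᶠ n in atTop, x (n + 1) ≠ T m := (tendsto_add_atTop_nat 1).eventually (hev (T m))
  have hineq : ∀ᶠ n in atTop,
      dist (x (n + 1)) (T m) + dist (T m) (x (n + 2)) + dist (x (n + 2)) (T (T m)) +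
        dist (T (T m)) (x (n + 1)) ≤
      α * (dist (x n) m + dist m (x (n + 1)) + dist (x (n + 1)) (T m) + dist (T m) (x n)) := by
    filter_upwards [hev m, hev (T m), hev1m, hev1T] with n h1 h2 h3 h4
    have h := hc (x n) m (x (n + 1)) (T m) h1 (hw1 n) h2 h3.symm (Ne.symm (hfix m)) h4
    rw [← hstep n, ← hstep (n + 1)] at h
    rw [show n + 1 + 1 = n + 2 by omega] at h
    linarith
  have hfL : Tendsto (fun n => dist (x (n + 1)) (T m) + dist (T m) (x (n + 2)) +
      dist (x (n + 2)) (T (T m)) + dist (T (T m)) (x (n + 1))) atTop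
      (𝓝 (dist m (T m) + dist (T m) m + dist m (T (T m)) + dist (T (T m)) m)) := by
    exact (((hx1.dist tendsto_const_nhds).add (tendsto_const_nhds.dist hx2)).add
      (hx2.dist tendsto_const_nhds)).add (tendsto_const_nhds.dist hx1)
  have hgL : Tendsto (fun n => α * (dist (x n) m + dist m (x (n + 1)) +
      dist (x (n + 1)) (T m) + dist (T m) (x n))) atTop
      (𝓝 (α * (dist m m + dist m m + dist m (T m) + dist (T m) m))) := by
    exact tendsto_const_nhds.mul ((((hm.dist tendsto_const_nhds).add
      (tendsto_const_nhds.dist hx1)).add (hx1.dist tendsto_const_nhds)).add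
      (tendsto_const_nhds.dist hm))
  have hfinal := le_of_tendsto_of_tendsto hfL hgL hineq
  rw [dist_self] at hfinal
  rw [dist_comm (T m) m, dist_comm (T (T m)) m] at hfinal
  have hd1 : 0 < dist m (T m) := dist_pos.mpr (Ne.symm hmT)
  have hd2 : 0 ≤ dist m (T (T m)) := dist_nonneg
  nlinarith
end

section
/- Let (M,d) be a metric space with at least four points and let T : M → M be a perimetric contraction on quadrilaterals. If T has a fixed point in M, then T cannot simultaneously have a periodic point of prime period 2 and a periodic point of prime period 3. -/
theorem perimetric_contraction_quadrilaterals_fixed_point_no_periodic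
    {M : Type*} [MetricSpace M] (T : M → M)
    (hfour : ∃ a b c e : M, a ≠ b ∧ a ≠ c ∧ a ≠ e ∧ b ≠ c ∧ b ≠ e ∧ c ≠ e)
    (hT : ∃ α : ℝ, 0 ≤ α ∧ α < 1 ∧ ∀ p q r s : M, p ≠ q → p ≠ r → p ≠ s → q ≠ r → q ≠ s → r ≠ s →
      dist (T p) (T q) + dist (T q) (T r) + dist (T r) (T s) + dist (T s) (T p) ≤
        α * (dist p q + dist q r + dist r s + dist s p))
    (hfix : ∃ m : M, T m = m) :
    ¬ ((∃ q : M, T (T q) = q ∧ T q ≠ q) ∧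
       (∃ r : M, T (T (T r)) = r ∧ T r ≠ r ∧ T (T r) ≠ r)) := by
  rintro ⟨⟨q, hq2, hq1⟩, ⟨r, hr3, hr1, hr2⟩⟩
  obtain ⟨α, hα0, hα1, hc⟩ := hT
  -- distinctness facts
  have hrd : T r ≠ T (T r) := fun h => hr2 ((congrArg T h).trans hr3)
  have hqr : q ≠ r := fun h => hr2 (by rw [← h, hq2])
  have hqtr : q ≠ T r := fun h =>
    hqr (hq2.symm.trans ((congrArg T (congrArg T h)).trans hr3))
  have hqt2r : q ≠ T (T r) := fun h =>
    hqtr (hq2.symm.trans ((congrArg T (congrArg T h)).trans (congrArg T hr3)))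
  have htqr : T q ≠ r := fun h => hqtr (hq2.symm.trans (congrArg T h))
  have htqtr : T q ≠ T r := fun h => hqt2r (hq2.symm.trans (congrArg T h))
  have htqt2r : T q ≠ T (T r) := fun h => hqr (hq2.symm.trans ((congrArg T h).trans hr3))
  have hqtq : q ≠ T q := hq1.symm
  have hrtr : r ≠ T r := hr1.symm
  have hrt2r : r ≠ T (T r) := hr2.symm
  -- six contraction steps around the orbit quadrilateral
  have h0 := hc q (T q) r (T r) hqtq hqr hqtr htqr htqtr hrtr
  rw [hq2] at h0
  have h1 := hc (T q) q (T r) (T (T r)) hq1 htqtr htqt2r hqtr hqt2r hrd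
  rw [hq2, hr3] at h1
  have h2 := hc q (T q) (T (T r)) r hqtq hqt2r hqr htqt2r htqr hrt2r.symm
  rw [hq2, hr3] at h2
  have h3 := hc (T q) q r (T r) hq1 htqr htqtr hqr hqtr hrtr
  rw [hq2] at h3
  have h4 := hc q (T q) (T r) (T (T r)) hqtq hqtr hqt2r htqtr htqt2r hrd
  rw [hq2, hr3] at h4
  have h5 := hc (T q) q (T (T r)) r hq1 htqt2r htqr hqt2r hqr hrt2r.symm
  rw [hq2, hr3] at h5
  -- chain the inequalities
  have hP0 : 0 < dist q (T q) + dist (T q) r + dist r (T r) + dist (T r) q := by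
    have := dist_pos.mpr hqtq
    have := dist_nonneg (x := T q) (y := r)
    have := dist_nonneg (x := r) (y := T r)
    have := dist_nonneg (x := T r) (y := q)
    linarith
  nlinarith [h5, mul_le_mul_of_nonneg_left h4 hα0,
    mul_le_mul_of_nonneg_left h3 (pow_nonneg hα0 2),
    mul_le_mul_of_nonneg_left h2 (pow_nonneg hα0 3),
    mul_le_mul_of_nonneg_left h1 (pow_nonneg hα0 4),
    mul_le_mul_of_nonneg_left h0 (pow_nonneg hα0 5),
    mul_lt_mul_of_pos_right (pow_lt_one₀ hα0 hα1 (by norm_num : (6:ℕ) ≠ 0)) hP0]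
end

section
/- Let (M,d) be a metric space with at least four points, let T : M → M be a perimetric contraction on quadrilaterals with constant α ∈ [0,1), and let a₀ ∈ M. Define the Picard iterates aₙ₊₁ = T aₙ. Suppose that for every n the four consecutive points aₙ, aₙ₊₁, aₙ₊₂, aₙ₊₃ are pairwise distinct. Then for every n ≥ 0, d(aₙ, aₙ₊₁) ≤ αⁿ · ( d(a₀,a₁) + d(a₁,a₂) + d(a₂,a₃) + d(a₃,a₀) ). -/
theorem perimetric_contraction_quadrilaterals_iterates_estimate
    {M : Type*} [MetricSpace M] (T : M → M)
    (hfour : ∃ a b c e : M, a ≠ b ∧ a ≠ c ∧ a ≠ e ∧ b ≠ c ∧ b ≠ e ∧ c ≠ e)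
    (α : ℝ) (hα0 : 0 ≤ α) (hα1 : α < 1)
    (hT : ∀ p q r s : M, p ≠ q → p ≠ r → p ≠ s → q ≠ r → q ≠ s → r ≠ s →
      dist (T p) (T q) + dist (T q) (T r) + dist (T r) (T s) + dist (T s) (T p) ≤
        α * (dist p q + dist q r + dist r s + dist s p))
    (a : ℕ → M) (ha : ∀ n : ℕ, a (n + 1) = T (a n))
    (hdist : ∀ n : ℕ, a n ≠ a (n + 1) ∧ a n ≠ a (n + 2) ∧ a n ≠ a (n + 3) ∧
      a (n + 1) ≠ a (n + 2) ∧ a (n + 1) ≠ a (n + 3) ∧ a (n + 2) ≠ a (n + 3)) :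
    ∀ n : ℕ, dist (a n) (a (n + 1)) ≤
      α ^ n * (dist (a 0) (a 1) + dist (a 1) (a 2) + dist (a 2) (a 3) + dist (a 3) (a 0)) := by

  have key : ∀ n : ℕ, dist (a n) (a (n+1)) + dist (a (n+1)) (a (n+2)) + dist (a (n+2)) (a (n+3))
      + dist (a (n+3)) (a n) ≤
      α ^ n * (dist (a 0) (a 1) + dist (a 1) (a 2) + dist (a 2) (a 3) + dist (a 3) (a 0)) := by
    intro n
    induction n with
    | zero => simp
    | succ n ih =>
      obtain ⟨h01, h02, h03, h12, h13, h23⟩ := hdist n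
      have h1 : a (n+1+1) = T (a (n+1)) := ha _
      have h2 : a (n+1+2) = T (a (n+2)) := by
        have := ha (n+2); simpa [show n+1+2 = n+2+1 by ring] using this
      have h3 : a (n+1+3) = T (a (n+3)) := by
        have := ha (n+3); simpa [show n+1+3 = n+3+1 by ring] using this
      have h0 : a (n+1) = T (a n) := ha n
      have step := hT (a n) (a (n+1)) (a (n+2)) (a (n+3)) h01 h02 h03 h12 h13 h23
      rw [← h0, ← h1, ← h2, ← h3] at step
      calc dist (a (n+1)) (a (n+1+1)) + dist (a (n+1+1)) (a (n+1+2)) + dist (a (n+1+2)) (a (n+1+3)) + dist (a (n+1+3)) (a (n+1))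
          ≤ α * (dist (a n) (a (n+1)) + dist (a (n+1)) (a (n+2)) + dist (a (n+2)) (a (n+3)) + dist (a (n+3)) (a n)) := step
        _ ≤ α * (α ^ n * (dist (a 0) (a 1) + dist (a 1) (a 2) + dist (a 2) (a 3) + dist (a 3) (a 0))) := by
            exact mul_le_mul_of_nonneg_left ih hα0
        _ = α ^ (n+1) * (dist (a 0) (a 1) + dist (a 1) (a 2) + dist (a 2) (a 3) + dist (a 3) (a 0)) := by ring
  intro n
  have := key n
  have d1 := dist_nonneg (x := a (n+1)) (y := a (n+2))
  have d2 := dist_nonneg (x := a (n+2)) (y := a (n+3))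
  have d3 := dist_nonneg (x := a (n+3)) (y := a n)
  linarith
end

section
/- Let (M,d) be a complete metric space with infinitely many points and let T : M → M be a perimetric contraction on quadrilaterals. Let m₀ ∈ M and define the iterative sequence mₙ₊₁ = T mₙ. If the sequence (mₙ) converges to a point ξ ∈ M with ξ ≠ mₙ for all n ≥ 0, then ξ is the unique fixed point of T. -/
theorem perimetric_contraction_quadrilaterals_unique_fixed_point
    {M : Type*} [MetricSpace M] [CompleteSpace M] [Infinite M] (T : M → M)
    (hT : ∃ α : ℝ, 0 ≤ α ∧ α < 1 ∧ ∀ p q r s : M, p ≠ q → p ≠ r → p ≠ s → q ≠ r → q ≠ s → r ≠ s →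
      dist (T p) (T q) + dist (T q) (T r) + dist (T r) (T s) + dist (T s) (T p) ≤
        α * (dist p q + dist q r + dist r s + dist s p))
    (m : ℕ → M) (hm : ∀ n : ℕ, m (n + 1) = T (m n))
    (ξ : M) (hconv : Filter.Tendsto m Filter.atTop (nhds ξ))
    (hne : ∀ n : ℕ, ξ ≠ m n) :
    T ξ = ξ ∧ ∀ η : M, T η = η → η = ξ := by
  obtain ⟨α, hα0, hα1, hcontr⟩ := hT
  -- consecutive iterates are distinct
  have hstep : ∀ n : ℕ, m n ≠ m (n + 1) := by
    intro n h
    have hconst : ∀ k : ℕ, m (k + n) = m n := by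
      intro k
      induction k with
      | zero => simp
      | succ k ih =>
        have : k + 1 + n = (k + n) + 1 := by ring
        rw [this, hm, ih, ← hm]
        exact h.symm
    have h1 : Filter.Tendsto (fun k => m (k + n)) Filter.atTop (nhds ξ) :=
      hconv.comp (Filter.tendsto_add_atTop_nat n)
    have h2 : Filter.Tendsto (fun _ : ℕ => m n) Filter.atTop (nhds ξ) := by
      simpa [hconst] using h1
    exact hne n (tendsto_nhds_unique tendsto_const_nhds h2).symm
  have hstep2 : ∀ n : ℕ, m n ≠ m (n + 2) := by
    intro n h
    have hconst : ∀ k : ℕ, m (2 * k + n) = m n := by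
      intro k
      induction k with
      | zero => simp
      | succ k ih =>
        have e : 2 * (k + 1) + n = ((2 * k + n) + 1) + 1 := by ring
        rw [e, hm, hm, ih, ← hm, ← hm]
        exact h.symm
    have hmono : Filter.Tendsto (fun k : ℕ => 2 * k + n) Filter.atTop Filter.atTop :=
      Filter.tendsto_atTop_mono (fun k => by simp only [id]; omega) Filter.tendsto_id
    have h1 : Filter.Tendsto (fun k => m (2 * k + n)) Filter.atTop (nhds ξ) :=
      hconv.comp hmono
    have h2 : Filter.Tendsto (fun _ : ℕ => m n) Filter.atTop (nhds ξ) := by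
      simpa [hconst] using h1
    exact hne n (tendsto_nhds_unique tendsto_const_nhds h2).symm
  -- shifted sequences converge
  have hc1 : Filter.Tendsto (fun n => m (n + 1)) Filter.atTop (nhds ξ) :=
    hconv.comp (Filter.tendsto_add_atTop_nat 1)
  have hc2 : Filter.Tendsto (fun n => m (n + 2)) Filter.atTop (nhds ξ) :=
    hconv.comp (Filter.tendsto_add_atTop_nat 2)
  have hd0 : Filter.Tendsto (fun n => dist (m n) (m (n + 1))) Filter.atTop (nhds 0) := by
    simpa using hconv.dist hc1
  have hd1 : Filter.Tendsto (fun n => dist (m (n + 1)) (m (n + 2))) Filter.atTop (nhds 0) := by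
    simpa using hc1.dist hc2
  have hd2 : Filter.Tendsto (fun n => dist (m (n + 2)) ξ) Filter.atTop (nhds 0) := by
    simpa using hc2.dist (tendsto_const_nhds (α := ℕ) (f := Filter.atTop) (x := ξ))
  have hd3 : Filter.Tendsto (fun n => dist ξ (m n)) Filter.atTop (nhds 0) := by
    simpa using (tendsto_const_nhds (α := ℕ) (f := Filter.atTop) (x := ξ)).dist hconv
  -- fixed point
  have hfix : T ξ = ξ := by
    have hbound : ∀ n : ℕ, dist (T ξ) (m (n + 1)) ≤
        α * (dist (m n) (m (n + 1)) + dist (m (n + 1)) (m (n + 2)) + dist (m (n + 2)) ξ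
          + dist ξ (m n)) := by
      intro n
      have h := hcontr (m n) (m (n + 1)) (m (n + 2)) ξ (hstep n) (hstep2 n)
        (hne n).symm (hstep (n + 1)) (hne (n + 1)).symm (hne (n + 2)).symm
      rw [← hm, ← hm, ← hm] at h
      have h1 := dist_nonneg (x := m (n + 1)) (y := m (n + 2))
      have h2 := dist_nonneg (x := m (n + 2)) (y := m (n + 3))
      have h3 := dist_nonneg (x := m (n + 3)) (y := T ξ)
      have h4 : dist (T ξ) (m (n + 1)) = dist (m (n + 1)) (T ξ) := dist_comm _ _
      linarith [h]
    have hg : Filter.Tendsto (fun n => α * (dist (m n) (m (n + 1)) + dist (m (n + 1)) (m (n + 2))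
        + dist (m (n + 2)) ξ + dist ξ (m n))) Filter.atTop (nhds 0) := by
      have := (((hd0.add hd1).add hd2).add hd3).const_mul α
      simpa using this
    have hsq : Filter.Tendsto (fun n => dist (T ξ) (m (n + 1))) Filter.atTop (nhds 0) :=
      squeeze_zero (fun n => dist_nonneg) hbound hg
    have hlim : Filter.Tendsto (fun n => dist (T ξ) (m (n + 1))) Filter.atTop
        (nhds (dist (T ξ) ξ)) :=
      (tendsto_const_nhds (α := ℕ) (f := Filter.atTop)).dist hc1
    have : dist (T ξ) ξ = 0 := tendsto_nhds_unique hlim hsq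
    exact dist_eq_zero.mp this
  refine ⟨hfix, fun η hη => ?_⟩
  by_contra hηξ
  have hd : 0 < dist η ξ := dist_pos.mpr hηξ
  -- eventually m n ≠ η
  have hev : ∀ᶠ n in Filter.atTop, η ≠ m n := by
    have : ∀ᶠ n in Filter.atTop, dist (m n) ξ < dist η ξ := by
      have := (Metric.tendsto_atTop.mp hconv) (dist η ξ) hd
      obtain ⟨N, hN⟩ := this
      exact Filter.eventually_atTop.mpr ⟨N, fun n hn => hN n hn⟩
    filter_upwards [this] with n h heq
    rw [← heq] at h
    exact lt_irrefl _ h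
  obtain ⟨N, hN⟩ := Filter.eventually_atTop.mp hev
  have hineq : ∀ n : ℕ, N ≤ n →
      dist η ξ + dist ξ (m (n + 1)) + dist (m (n + 1)) (m (n + 2)) + dist (m (n + 2)) η ≤
        α * (dist η ξ + dist ξ (m n) + dist (m n) (m (n + 1)) + dist (m (n + 1)) η) := by
    intro n hn
    have h := hcontr η ξ (m n) (m (n + 1)) hηξ (hN n hn) (hN (n + 1) (by omega))
      (hne n) (hne (n + 1)) (hstep n)
    rw [hη, hfix, ← hm, ← hm] at h
    linarith [h]
  -- take limits
  have hlhs : Filter.Tendsto (fun n => dist η ξ + dist ξ (m (n + 1))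
      + dist (m (n + 1)) (m (n + 2)) + dist (m (n + 2)) η) Filter.atTop
      (nhds (dist η ξ + dist ξ η)) := by
    have t1 : Filter.Tendsto (fun n : ℕ => dist ξ (m (n + 1))) Filter.atTop (nhds 0) := by
      simpa using (tendsto_const_nhds (α := ℕ) (f := Filter.atTop) (x := ξ)).dist hc1
    have t2 : Filter.Tendsto (fun n : ℕ => dist (m (n + 2)) η) Filter.atTop
        (nhds (dist ξ η)) :=
      hc2.dist (tendsto_const_nhds (α := ℕ) (f := Filter.atTop))
    have := (((tendsto_const_nhds (α := ℕ) (f := Filter.atTop)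
      (x := dist η ξ)).add t1).add hd1).add t2
    simpa using this
  have hrhs : Filter.Tendsto (fun n => α * (dist η ξ + dist ξ (m n)
      + dist (m n) (m (n + 1)) + dist (m (n + 1)) η)) Filter.atTop
      (nhds (α * (dist η ξ + dist ξ η))) := by
    have t2 : Filter.Tendsto (fun n : ℕ => dist (m (n + 1)) η) Filter.atTop
        (nhds (dist ξ η)) :=
      hc1.dist (tendsto_const_nhds (α := ℕ) (f := Filter.atTop))
    have := ((((tendsto_const_nhds (α := ℕ) (f := Filter.atTop)
      (x := dist η ξ)).add hd3).add hd0).add t2).const_mul α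
    simpa using this
  have hle : dist η ξ + dist ξ η ≤ α * (dist η ξ + dist ξ η) :=
    le_of_tendsto_of_tendsto hlhs hrhs
      (Filter.eventually_atTop.mpr ⟨N, fun n hn => hineq n hn⟩)
  have hcomm : dist ξ η = dist η ξ := dist_comm _ _
  nlinarith [hle, hd]
end

section
/- Let (M,d) be a metric space with at least four points and let T : M → M be a perimetric contraction on quadrilaterals with constant δ ∈ [0,1/5). Then T is a Kannan type perimetric contraction on quadrilaterals, with constant 2δ/(1−δ) ∈ [0,1/2). -/
theorem perimetric_implies_kannan_perimetric_quadrilaterals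
    {M : Type*} [MetricSpace M] (T : M → M)
    (hfour : ∃ a b c e : M, a ≠ b ∧ a ≠ c ∧ a ≠ e ∧ b ≠ c ∧ b ≠ e ∧ c ≠ e)
    (δ : ℝ) (hδ0 : 0 ≤ δ) (hδ1 : δ < 1/5)
    (hT : ∀ p q r s : M, p ≠ q → p ≠ r → p ≠ s → q ≠ r → q ≠ s → r ≠ s →
      dist (T p) (T q) + dist (T q) (T r) + dist (T r) (T s) + dist (T s) (T p) ≤
        δ * (dist p q + dist q r + dist r s + dist s p)) :
    0 ≤ 2 * δ / (1 - δ) ∧ 2 * δ / (1 - δ) < 1/2 ∧ ∀ p q r s : M, p ≠ q → p ≠ r → p ≠ s → q ≠ r → q ≠ s → r ≠ s →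
      dist (T p) (T q) + dist (T q) (T r) + dist (T r) (T s) + dist (T s) (T p) ≤
        (2 * δ / (1 - δ)) * (dist p (T p) + dist q (T q) + dist r (T r) + dist s (T s)) := by
  have h1δ : (0:ℝ) < 1 - δ := by linarith
  refine ⟨by positivity, by rw [div_lt_iff₀ h1δ]; linarith, ?_⟩
  intro p q r s hpq hpr hps hqr hqs hrs
  have hC := hT p q r s hpq hpr hps hqr hqs hrs
  have t1 := dist_triangle4 p (T p) (T q) q
  have t2 := dist_triangle4 q (T q) (T r) r
  have t3 := dist_triangle4 r (T r) (T s) s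
  have t4 := dist_triangle4 s (T s) (T p) p
  rw [div_mul_eq_mul_div, le_div_iff₀ h1δ]
  have e1 : dist (T q) q = dist q (T q) := dist_comm _ _
  have e2 : dist (T r) r = dist r (T r) := dist_comm _ _
  have e3 : dist (T s) s = dist s (T s) := dist_comm _ _
  have e4 : dist (T p) p = dist p (T p) := dist_comm _ _
  nlinarith [dist_nonneg (x := T p) (y := T q), dist_nonneg (x := T q) (y := T r),
    dist_nonneg (x := T r) (y := T s), dist_nonneg (x := T s) (y := T p)]
end

section
/- Let (M,d) be a complete metric space with at least four points and let T : M → M be a Kannan type perimetric contraction on quadrilaterals. If T has no periodic points of prime period 2 (i.e., T²m = m implies Tm = m for all m ∈ M) and no periodic points of prime period 3 (i.e., T³m = m implies Tm = m for all m ∈ M), then T has a fixed point in M. Moreover, T has at most three fixed points. -/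
open Filter Topology

theorem kannan_perimetric_quadrilaterals_fixed_point
    {M : Type*} [MetricSpace M] [CompleteSpace M] (T : M → M)
    (hfour : ∃ a b c e : M, a ≠ b ∧ a ≠ c ∧ a ≠ e ∧ b ≠ c ∧ b ≠ e ∧ c ≠ e)
    (hT : ∃ δ : ℝ, 0 ≤ δ ∧ δ < 1/2 ∧ ∀ p q r s : M, p ≠ q → p ≠ r → p ≠ s → q ≠ r → q ≠ s → r ≠ s →
      dist (T p) (T q) + dist (T q) (T r) + dist (T r) (T s) + dist (T s) (T p) ≤
        δ * (dist p (T p) + dist q (T q) + dist r (T r) + dist s (T s)))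
    (h2 : ∀ m : M, T (T m) = m → T m = m)
    (h3 : ∀ m : M, T (T (T m)) = m → T m = m) :
    (∃ m : M, T m = m) ∧
    ¬ ∃ p q r s : M, p ≠ q ∧ p ≠ r ∧ p ≠ s ∧ q ≠ r ∧ q ≠ s ∧ r ≠ s ∧
      T p = p ∧ T q = q ∧ T r = r ∧ T s = s := by
  obtain ⟨δ, hδ0, hδ2, hc⟩ := hT
  have h1δ : 0 < 1 - δ := by linarith
  constructor
  · by_contra hfix
    push_neg at hfix
    obtain ⟨x₀, -, -, -, -⟩ := hfour
    set x : ℕ → M := fun n => T^[n] x₀ with hx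
    have hxsucc : ∀ n, x (n + 1) = T (x n) := by
      intro n; simp only [hx]; exact Function.iterate_succ_apply' T n x₀
    have hne : ∀ n, x n ≠ x (n + 1) := by
      intro n h
      exact hfix (x n) ((hxsucc n).symm.trans h.symm)
    have hne2 : ∀ n, x n ≠ x (n + 2) := by
      intro n h
      apply hfix (x n)
      apply h2
      have e1 : T (T (x n)) = x (n + 2) := by
        rw [← hxsucc n, ← hxsucc (n + 1)]
      rw [e1]; exact h.symm
    have hne3 : ∀ n, x n ≠ x (n + 3) := by
      intro n h
      apply hfix (x n)
      apply h3
      have e1 : T (T (T (x n))) = x (n + 3) := by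
        rw [← hxsucc n, ← hxsucc (n + 1), ← hxsucc (n + 2)]
      rw [e1]; exact h.symm
    have key : ∀ n,
        dist (x (n+1)) (x (n+2)) + dist (x (n+2)) (x (n+3)) + dist (x (n+3)) (x (n+4)) ≤
          δ * (dist (x n) (x (n+1)) + dist (x (n+1)) (x (n+2)) + dist (x (n+2)) (x (n+3)) +
            dist (x (n+3)) (x (n+4))) := by
      intro n
      have h := hc (x n) (x (n+1)) (x (n+2)) (x (n+3)) (hne n) (hne2 n) (hne3 n)
        (hne (n+1)) (hne2 (n+1)) (hne (n+2))
      have e1 : T (x n) = x (n+1) := (hxsucc n).symm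
      have e2 : T (x (n+1)) = x (n+2) := (hxsucc (n+1)).symm
      have e3 : T (x (n+2)) = x (n+3) := (hxsucc (n+2)).symm
      have e4 : T (x (n+3)) = x (n+4) := (hxsucc (n+3)).symm
      rw [e1, e2, e3, e4] at h
      have hnn : (0:ℝ) ≤ dist (x (n+4)) (x (n+1)) := dist_nonneg
      linarith
    set S : ℕ → ℝ := fun n =>
      dist (x n) (x (n+1)) + dist (x (n+1)) (x (n+2)) + dist (x (n+2)) (x (n+3)) with hS
    have hSnn : ∀ n, 0 ≤ S n := by
      intro n
      have : S n = dist (x n) (x (n+1)) + dist (x (n+1)) (x (n+2)) + dist (x (n+2)) (x (n+3)) := rfl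
      rw [this]; positivity
    set k : ℝ := δ / (1 - δ) with hk
    have hk0 : 0 ≤ k := div_nonneg hδ0 h1δ.le
    have hk1 : k < 1 := by rw [hk, div_lt_one h1δ]; linarith
    have hSstep : ∀ n, S (n+1) ≤ k * S n := by
      intro n
      have h := key n
      have eS1 : S (n+1) = dist (x (n+1)) (x (n+2)) + dist (x (n+2)) (x (n+3)) +
          dist (x (n+3)) (x (n+4)) := rfl
      have eS0 : S n = dist (x n) (x (n+1)) + dist (x (n+1)) (x (n+2)) +
          dist (x (n+2)) (x (n+3)) := rfl
      rw [eS1, hk, div_mul_eq_mul_div, le_div_iff₀ h1δ, eS0]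
      nlinarith [h, mul_nonneg hδ0 (dist_nonneg : (0:ℝ) ≤ dist (x (n+1)) (x (n+2))),
        mul_nonneg hδ0 (dist_nonneg : (0:ℝ) ≤ dist (x (n+2)) (x (n+3)))]
    have hgeo : ∀ n, S n ≤ S 0 * k ^ n := by
      intro n
      induction n with
      | zero => simp
      | succ n ih =>
        calc S (n+1) ≤ k * S n := hSstep n
          _ ≤ k * (S 0 * k ^ n) := mul_le_mul_of_nonneg_left ih hk0
          _ = S 0 * k ^ (n+1) := by ring
    have hdist : ∀ n, dist (x n) (x (n+1)) ≤ S 0 * k ^ n := by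
      intro n
      have h1 := hgeo n
      have h2 : dist (x n) (x (n+1)) ≤ S n := by
        have eS : S n = dist (x n) (x (n+1)) + dist (x (n+1)) (x (n+2)) +
            dist (x (n+2)) (x (n+3)) := rfl
        have hnn1 : (0:ℝ) ≤ dist (x (n+1)) (x (n+2)) := dist_nonneg
        have hnn2 : (0:ℝ) ≤ dist (x (n+2)) (x (n+3)) := dist_nonneg
        rw [eS]; linarith
      linarith
    have hcauchy : CauchySeq x := cauchySeq_of_le_geometric k (S 0) hk1 hdist
    obtain ⟨m, hm⟩ := cauchySeq_tendsto_of_complete hcauchy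
    have htend : Tendsto (fun n => S 0 * k ^ n) atTop (𝓝 0) := by
      have h := tendsto_pow_atTop_nhds_zero_of_lt_one hk0 hk1
      simpa using h.const_mul (S 0)
    have hev : ∃ N, ∀ n, N ≤ n → x n ≠ m := by
      by_contra hcon
      push_neg at hcon
      obtain ⟨i, -, hi⟩ := hcon 0
      obtain ⟨j, hij, hj⟩ := hcon (i + 1)
      have step : ∀ n : ℕ, x ((j - i) + n) = T^[j - i] (x n) := by
        intro n; simp only [hx]; exact Function.iterate_add_apply T (j - i) n x₀
      have hper : ∀ t, x (i + t * (j - i)) = x i := by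
        intro t
        induction t with
        | zero => simp
        | succ t ih =>
          have hidx : i + (t + 1) * (j - i) = (j - i) + (i + t * (j - i)) := by ring
          rw [hidx, step, ih]
          have h4 : T^[j - i] (x i) = x ((j - i) + i) := (step i).symm
          have h5 : (j - i) + i = j := by omega
          rw [h4, h5, hj, hi]
      have hD : 0 < dist (x i) (x (i + 1)) := dist_pos.2 (hne i)
      obtain ⟨n₀, hn₀⟩ := eventually_atTop.1 (htend.eventually_lt_const hD)
      set n₁ := i + n₀ * (j - i) with hn₁
      have hge : n₀ ≤ n₁ :=
        le_trans (by simpa using Nat.mul_le_mul (le_refl n₀) (show 1 ≤ j - i by omega))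
          (Nat.le_add_left _ _)
      have heq : x n₁ = x i := hper n₀
      have heq1 : x (n₁ + 1) = x (i + 1) := by
        rw [hxsucc n₁, heq, ← hxsucc i]
      have hlt : S 0 * k ^ n₁ < dist (x i) (x (i + 1)) := hn₀ n₁ hge
      have hb := hdist n₁
      rw [heq, heq1] at hb
      linarith
    obtain ⟨N, hN⟩ := hev
    have hD : 0 < dist m (T m) := dist_pos.2 fun h => hfix m h.symm
    have hmain : ∀ n, N ≤ n → (1 - δ) * dist m (T m) ≤ dist m (x (n + 3)) + δ * S n := by
      intro n hn
      have h := hc (x n) (x (n+1)) (x (n+2)) m (hne n) (hne2 n) (hN n hn) (hne (n+1))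
        (hN (n+1) (by omega)) (hN (n+2) (by omega))
      have e1 : T (x n) = x (n+1) := (hxsucc n).symm
      have e2 : T (x (n+1)) = x (n+2) := (hxsucc (n+1)).symm
      have e3 : T (x (n+2)) = x (n+3) := (hxsucc (n+2)).symm
      rw [e1, e2, e3] at h
      have htri : dist m (T m) ≤ dist m (x (n+3)) + dist (x (n+3)) (T m) := dist_triangle _ _ _
      have eS : S n = dist (x n) (x (n+1)) + dist (x (n+1)) (x (n+2)) +
          dist (x (n+2)) (x (n+3)) := rfl
      have hnn1 : (0:ℝ) ≤ dist (x (n+1)) (x (n+2)) := dist_nonneg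
      have hnn2 : (0:ℝ) ≤ dist (x (n+2)) (x (n+3)) := dist_nonneg
      have hnn3 : (0:ℝ) ≤ dist (T m) (x (n+1)) := dist_nonneg
      rw [eS]
      linarith
    have htend2 : Tendsto (fun n => dist m (x (n + 3)) + δ * S n) atTop (𝓝 0) := by
      have t1 : Tendsto (fun n => x (n + 3)) atTop (𝓝 m) := hm.comp (tendsto_add_atTop_nat 3)
      have t2 : Tendsto (fun n => dist m (x (n + 3))) atTop (𝓝 0) := by
        have h := (tendsto_const_nhds : Tendsto (fun _ : ℕ => m) atTop (𝓝 m)).dist t1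
        simpa using h
      have t3 : Tendsto S atTop (𝓝 0) := squeeze_zero hSnn hgeo htend
      have t4 : Tendsto (fun n => δ * S n) atTop (𝓝 0) := by
        simpa using t3.const_mul δ
      simpa using t2.add t4
    have hfin : (1 - δ) * dist m (T m) ≤ 0 :=
      ge_of_tendsto htend2 (eventually_atTop.2 ⟨N, hmain⟩)
    exact absurd hfin (not_le.2 (mul_pos h1δ hD))
  · rintro ⟨p, q, r, s, hpq, hpr, hps, hqr, hqs, hrs, hp, hq, hr, hs⟩
    have h := hc p q r s hpq hpr hps hqr hqs hrs
    rw [hp, hq, hr, hs] at h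
    simp only [dist_self, add_zero, mul_zero, zero_add] at h
    have h1 := dist_pos.2 hpq
    have h2 := dist_nonneg (x := q) (y := r)
    have h3 := dist_nonneg (x := r) (y := s)
    have h4 := dist_nonneg (x := s) (y := p)
    linarith
end

section
/- Let (M,d) be a metric space with at least four points, let T : M → M be a Kannan type perimetric contraction on quadrilaterals with constant δ ∈ [0,1/2), and let a₀ ∈ M with Picard iterates aₙ₊₁ = T aₙ. If for some i the points aᵢ, aᵢ₊₁, aᵢ₊₂, aᵢ₊₃ are pairwise distinct, then d(aᵢ₊₃, aᵢ₊₄) ≤ (δ/(2−δ))·( d(aᵢ,aᵢ₊₁) + d(aᵢ₊₁,aᵢ₊₂) + d(aᵢ₊₂,aᵢ₊₃) ). -/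
theorem kannan_perimetric_quadrilaterals_iterate_estimate
    {M : Type*} [MetricSpace M] (T : M → M)
    (hfour : ∃ a b c e : M, a ≠ b ∧ a ≠ c ∧ a ≠ e ∧ b ≠ c ∧ b ≠ e ∧ c ≠ e)
    (δ : ℝ) (hδ0 : 0 ≤ δ) (hδ1 : δ < 1/2)
    (hT : ∀ p q r s : M, p ≠ q → p ≠ r → p ≠ s → q ≠ r → q ≠ s → r ≠ s →
      dist (T p) (T q) + dist (T q) (T r) + dist (T r) (T s) + dist (T s) (T p) ≤
        δ * (dist p (T p) + dist q (T q) + dist r (T r) + dist s (T s)))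
    (a : ℕ → M) (ha : ∀ n : ℕ, a (n + 1) = T (a n)) (i : ℕ)
    (hdist : a i ≠ a (i + 1) ∧ a i ≠ a (i + 2) ∧ a i ≠ a (i + 3) ∧
      a (i + 1) ≠ a (i + 2) ∧ a (i + 1) ≠ a (i + 3) ∧ a (i + 2) ≠ a (i + 3)) :
    dist (a (i + 3)) (a (i + 4)) ≤
      (δ / (2 - δ)) * (dist (a i) (a (i + 1)) + dist (a (i + 1)) (a (i + 2)) +
        dist (a (i + 2)) (a (i + 3))) := by
  obtain ⟨h01, h02, h03, h12, h13, h23⟩ := hdist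
  have e1 : T (a i) = a (i + 1) := (ha i).symm
  have e2 : T (a (i + 1)) = a (i + 2) := (ha (i + 1)).symm
  have e3 : T (a (i + 2)) = a (i + 3) := (ha (i + 2)).symm
  have e4 : T (a (i + 3)) = a (i + 4) := (ha (i + 3)).symm
  have key := hT (a i) (a (i + 1)) (a (i + 2)) (a (i + 3)) h01 h02 h03 h12 h13 h23
  rw [e1, e2, e3, e4] at key
  have tri : dist (a (i + 3)) (a (i + 4)) ≤
      dist (a (i + 1)) (a (i + 2)) + dist (a (i + 2)) (a (i + 3)) +
        dist (a (i + 4)) (a (i + 1)) := by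
    have t1 := dist_triangle (a (i + 3)) (a (i + 1)) (a (i + 4))
    have t2 := dist_triangle (a (i + 3)) (a (i + 2)) (a (i + 1))
    rw [dist_comm (a (i + 3)) (a (i + 2)), dist_comm (a (i + 2)) (a (i + 1))] at t2
    rw [dist_comm (a (i + 1)) (a (i + 4))] at t1
    linarith
  have hden : 0 < 2 - δ := by linarith
  rw [div_mul_eq_mul_div, le_div_iff₀ hden]
  nlinarith [@dist_nonneg M _ (a (i + 3)) (a (i + 4))]
end

section
/- Let (M,d) be a complete metric space with at least four points and let T : M → M be a Kannan type perimetric contraction on quadrilaterals. If T has a fixed point in M, then T has no periodic points of prime period 3; that is, for every m ∈ M, T³m = m implies Tm = m. -/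
theorem kannan_perimetric_quadrilaterals_no_period_three
    {M : Type*} [MetricSpace M] [CompleteSpace M] (T : M → M)
    (hfour : ∃ a b c e : M, a ≠ b ∧ a ≠ c ∧ a ≠ e ∧ b ≠ c ∧ b ≠ e ∧ c ≠ e)
    (hT : ∃ δ : ℝ, 0 ≤ δ ∧ δ < 1/2 ∧ ∀ p q r s : M, p ≠ q → p ≠ r → p ≠ s → q ≠ r → q ≠ s → r ≠ s →
      dist (T p) (T q) + dist (T q) (T r) + dist (T r) (T s) + dist (T s) (T p) ≤
        δ * (dist p (T p) + dist q (T q) + dist r (T r) + dist s (T s)))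
    (hfix : ∃ m : M, T m = m) :
    ∀ m : M, T (T (T m)) = m → T m = m := by
  obtain ⟨δ, hδ0, hδ, hcontr⟩ := hT
  obtain ⟨x, hx⟩ := hfix
  intro m h3
  by_contra hne
  have hab : m ≠ T m := fun h => hne h.symm
  have hbc : T m ≠ T (T m) := fun h => hne (h.trans ((congrArg T h).trans h3))
  have hac : m ≠ T (T m) := fun h => hne ((congrArg T h).trans h3)
  have hxa : x ≠ m := fun h => hne (((congrArg T h.symm).trans hx).trans h)
  have hxb : x ≠ T m := fun h => hbc ((((congrArg T h.symm).trans hx).trans h)).symm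
  have hxc : x ≠ T (T m) := fun h =>
    hac (h3.symm.trans (((congrArg T h.symm).trans hx).trans h))
  have key := hcontr x m (T m) (T (T m)) hxa hxb hxc hab hac hbc
  rw [hx, h3, dist_self] at key
  have htri : dist m (T m) ≤ dist m x + dist x (T m) := dist_triangle m x (T m)
  have hpos : 0 < dist m (T m) := dist_pos.mpr hab
  have h1 : 0 ≤ dist (T m) (T (T m)) := dist_nonneg
  have h2 : 0 ≤ dist (T (T m)) m := dist_nonneg
  nlinarith [dist_comm m x, dist_comm m (T m)]
end

section
/- Let (M,d) be a complete metric space with infinitely many points and let T : M → M be a Kannan type perimetric contraction on quadrilaterals. Let m₀ ∈ M and define the iterative sequence mₙ₊₁ = T mₙ. If the sequence (mₙ) converges to a point ξ ∈ M with ξ ≠ mₙ for all n ≥ 0, then ξ is the unique fixed point of T. -/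
theorem kannan_perimetric_quadrilaterals_unique_fixed_point
    {M : Type*} [MetricSpace M] [CompleteSpace M] [Infinite M] (T : M → M)
    (hT : ∃ δ : ℝ, 0 ≤ δ ∧ δ < 1/2 ∧ ∀ p q r s : M, p ≠ q → p ≠ r → p ≠ s → q ≠ r → q ≠ s → r ≠ s →
      dist (T p) (T q) + dist (T q) (T r) + dist (T r) (T s) + dist (T s) (T p) ≤
        δ * (dist p (T p) + dist q (T q) + dist r (T r) + dist s (T s)))
    (m : ℕ → M) (hm : ∀ n : ℕ, m (n + 1) = T (m n))
    (ξ : M) (hconv : Filter.Tendsto m Filter.atTop (nhds ξ))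
    (hne : ∀ n : ℕ, ξ ≠ m n) :
    T ξ = ξ ∧ ∀ η : M, T η = η → η = ξ := by
  obtain ⟨δ, hδ0, hδ2, hC⟩ := hT
  -- all iterates are pairwise distinct
  have hdist : ∀ i j : ℕ, i < j → m i ≠ m j := by
    intro i j hij heq
    set p := j - i with hp
    have hp1 : 1 ≤ p := by omega
    have hshift : ∀ t, m (i + t) = m (j + t) := by
      intro t
      induction t with
      | zero => simpa using heq
      | succ t ih =>
        have : T (m (i + t)) = T (m (j + t)) := congrArg T ih
        simpa [← Nat.add_assoc, hm] using this
    have hper : ∀ k, m (i + k * p) = m i := by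
      intro k
      induction k with
      | zero => simp
      | succ k ih =>
        have he : i + (k + 1) * p = j + k * p := by
          have : (k + 1) * p = k * p + p := by ring
          omega
        rw [he, ← hshift (k * p), ih]
    have htend : Filter.Tendsto (fun k : ℕ => i + k * p) Filter.atTop Filter.atTop := by
      apply Filter.tendsto_atTop_atTop.mpr
      intro b
      refine ⟨b, fun a ha => ?_⟩
      have : a ≤ a * p := Nat.le_mul_of_pos_right a (by omega)
      omega
    have hsub : Filter.Tendsto (fun k : ℕ => m (i + k * p)) Filter.atTop (nhds ξ) :=
      hconv.comp htend
    have hconst : Filter.Tendsto (fun k : ℕ => m (i + k * p)) Filter.atTop (nhds (m i)) := by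
      simp only [hper]; exact (tendsto_const_nhds : Filter.Tendsto (fun _ : ℕ => m i) Filter.atTop _)
    exact hne i (tendsto_nhds_unique hsub hconst)
  have hm1 : Filter.Tendsto (fun n => m (n + 1)) Filter.atTop (nhds ξ) :=
    hconv.comp (Filter.tendsto_add_atTop_nat 1)
  have hd : Filter.Tendsto (fun n => dist (m n) (m (n + 1))) Filter.atTop (nhds 0) := by
    simpa using hconv.dist hm1
  have hd1 : Filter.Tendsto (fun n => dist (m (n + 1)) (m (n + 2))) Filter.atTop (nhds 0) :=
    hd.comp (Filter.tendsto_add_atTop_nat 1)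
  have hd2 : Filter.Tendsto (fun n => dist (m (n + 2)) (m (n + 3))) Filter.atTop (nhds 0) :=
    hd.comp (Filter.tendsto_add_atTop_nat 2)
  have key : ∀ n, dist (T ξ) (m (n + 1)) ≤
      δ * (dist ξ (T ξ) + dist (m n) (m (n + 1)) + dist (m (n + 1)) (m (n + 2)) +
        dist (m (n + 2)) (m (n + 3))) := by
    intro n
    have h := hC ξ (m n) (m (n + 1)) (m (n + 2)) (hne n) (hne (n + 1)) (hne (n + 2))
      (hdist n (n + 1) (by omega)) (hdist n (n + 2) (by omega)) (hdist (n + 1) (n + 2) (by omega))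
    have e1 : T (m n) = m (n + 1) := (hm n).symm
    have e2 : T (m (n + 1)) = m (n + 2) := (hm (n + 1)).symm
    have e3 : T (m (n + 2)) = m (n + 3) := (hm (n + 2)).symm
    rw [e1, e2, e3] at h
    have n1 := dist_nonneg (x := m (n + 1)) (y := m (n + 2))
    have n2 := dist_nonneg (x := m (n + 2)) (y := m (n + 3))
    have n3 := dist_nonneg (x := m (n + 3)) (y := T ξ)
    linarith
  have hL : Filter.Tendsto (fun n => dist (T ξ) (m (n + 1))) Filter.atTop (nhds (dist (T ξ) ξ)) :=
    Filter.Tendsto.dist tendsto_const_nhds hm1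
  have hR : Filter.Tendsto (fun n => δ * (dist ξ (T ξ) + dist (m n) (m (n + 1)) +
      dist (m (n + 1)) (m (n + 2)) + dist (m (n + 2)) (m (n + 3)))) Filter.atTop
      (nhds (δ * (dist ξ (T ξ) + 0 + 0 + 0))) :=
    (((tendsto_const_nhds.add hd).add hd1).add hd2).const_mul δ
  have hle : dist (T ξ) ξ ≤ δ * (dist ξ (T ξ) + 0 + 0 + 0) :=
    le_of_tendsto_of_tendsto' hL hR key
  have hfix : T ξ = ξ := by
    rw [dist_comm ξ (T ξ)] at hle
    have h0 := dist_nonneg (x := T ξ) (y := ξ)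
    have : dist (T ξ) ξ = 0 := by nlinarith
    exact dist_eq_zero.mp this
  refine ⟨hfix, ?_⟩
  intro η hη
  by_contra hne'
  have hηξ : η ≠ ξ := hne'
  have hev : ∀ᶠ n in Filter.atTop, m n ≠ η := by
    by_cases hx : ∃ n₀, m n₀ = η
    · obtain ⟨n₀, h0⟩ := hx
      filter_upwards [Filter.eventually_gt_atTop n₀] with n hn h'
      exact hdist n₀ n hn (h0.trans h'.symm)
    · exact Filter.Eventually.of_forall fun n h => hx ⟨n, h⟩
  have hev2 : ∀ᶠ n in Filter.atTop, m (n + 1) ≠ η :=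
    (Filter.tendsto_add_atTop_nat 1).eventually hev
  have hkey2 : ∀ᶠ n in Filter.atTop,
      dist η ξ ≤ δ * (dist (m n) (m (n + 1)) + dist (m (n + 1)) (m (n + 2))) := by
    filter_upwards [hev, hev2] with n h1 h2
    have h := hC η ξ (m n) (m (n + 1)) hηξ h1.symm h2.symm (hne n) (hne (n + 1))
      (hdist n (n + 1) (by omega))
    have e1 : T (m n) = m (n + 1) := (hm n).symm
    have e2 : T (m (n + 1)) = m (n + 2) := (hm (n + 1)).symm
    rw [hη, hfix, e1, e2, dist_self, dist_self] at h
    have n1 := dist_nonneg (x := ξ) (y := m (n + 1))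
    have n2 := dist_nonneg (x := m (n + 1)) (y := m (n + 2))
    have n3 := dist_nonneg (x := m (n + 2)) (y := η)
    linarith
  have hR2 : Filter.Tendsto (fun n => δ * (dist (m n) (m (n + 1)) +
      dist (m (n + 1)) (m (n + 2)))) Filter.atTop (nhds (δ * (0 + 0))) :=
    (hd.add hd1).const_mul δ
  have : dist η ξ ≤ δ * (0 + 0) :=
    le_of_tendsto_of_tendsto tendsto_const_nhds hR2 hkey2
  have h0 := dist_nonneg (x := η) (y := ξ)
  exact hne' (dist_eq_zero.mp (by linarith))
end

section
/- Let M = [0,1] with the Euclidean metric, let k > 1 be a real number, and define T : M → M by T(x) = x/k. Then T is a Kannan type perimetric contraction on quadrilaterals if and only if k > 5. -/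
/-!
For `T x = x / k` we have `d(Tx, Ty) = |x - y| / k` and `d(x, Tx) = (1 - 1/k) x`, so the Kannan
inequality with constant `δ` says that the perimeter of every quadrilateral in `[0, 1]` is at most
`δ (k - 1)` times the sum of its vertices. The best such constant is `2`: the triangle inequality
through `0` gives `|x - y| ≤ x + y`, and the quadrilaterals `1, 0, 1 - ε, ε` come arbitrarily close.
Hence a `δ < 1/2` exists iff `2 < (k - 1) / 2`, i.e. `k > 5`.
-/

open Set

section QuadPerimeter

variable {α β : Type*} [PseudoMetricSpace α] [PseudoMetricSpace β]

def quadPerimeter (p q r s : α) : ℝ :=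
  dist p q + dist q r + dist r s + dist s p

def KannanPerimetricWith (δ : ℝ) (T : α → α) : Prop :=
  ∀ p q r s : α, p ≠ q → p ≠ r → p ≠ s → q ≠ r → q ≠ s → r ≠ s →
    quadPerimeter (T p) (T q) (T r) (T s) ≤
      δ * (dist p (T p) + dist q (T q) + dist r (T r) + dist s (T s))

theorem quadPerimeter_le_two_mul (o p q r s : α) :
    quadPerimeter p q r s ≤ 2 * (dist p o + dist q o + dist r o + dist s o) := by
  have := dist_triangle_right p q o
  have := dist_triangle_right q r o
  have := dist_triangle_right r s o
  have := dist_triangle_right s p o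
  unfold quadPerimeter
  linarith

theorem quadPerimeter_map_of_dist_eq {f : α → β} {c : ℝ}
    (hf : ∀ x y, dist (f x) (f y) = c * dist x y) (p q r s : α) :
    quadPerimeter (f p) (f q) (f r) (f s) = c * quadPerimeter p q r s := by
  simp only [quadPerimeter, hf]
  ring

theorem quadPerimeter_coe {t : Set α} (p q r s : t) :
    quadPerimeter (p : α) q r s = quadPerimeter p q r s :=
  rfl

end QuadPerimeter

theorem quadPerimeter_one_zero_one_sub_self {ε : ℝ} (hε : ε ≤ 1 / 2) :
    quadPerimeter (1 : ℝ) 0 (1 - ε) ε = 4 - 4 * ε := by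
  simp only [quadPerimeter, Real.dist_eq]
  rw [abs_of_nonneg (by norm_num), abs_of_nonpos (by linarith), abs_of_nonneg (by linarith),
    abs_of_nonpos (by linarith)]
  ring

theorem two_le_of_forall_quadPerimeter_le {c : ℝ}
    (h : ∀ p q r s : Icc (0 : ℝ) 1, p ≠ q → p ≠ r → p ≠ s → q ≠ r → q ≠ s → r ≠ s →
      quadPerimeter p q r s ≤ c * (p + q + r + s)) :
    2 ≤ c := by
  have hnear : ∀ ε : ℝ, 0 < ε → ε < 1 / 2 → 2 - 2 * ε ≤ c := by
    intro ε hε₀ hε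
    have hne : ∀ {a b : Icc (0 : ℝ) 1}, (a : ℝ) ≠ b → a ≠ b := fun hab h => hab (congrArg _ h)
    have := h ⟨1, by norm_num⟩ ⟨0, by norm_num⟩ ⟨1 - ε, by constructor <;> linarith⟩
      ⟨ε, by constructor <;> linarith⟩ (hne (by norm_num)) (hne (by linarith))
      (hne (by linarith)) (hne (by linarith)) (hne (by linarith)) (hne (by linarith))
    rw [← quadPerimeter_coe, quadPerimeter_one_zero_one_sub_self hε.le] at this
    norm_num at this
    linarith
  refine le_of_forall_pos_lt_add fun ε hε => ?_
  have := hnear (min (ε / 4) (1 / 4)) (by positivity) (by linarith [min_le_right (ε / 4) (1 / 4)])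
  linarith [min_le_left (ε / 4) (1 / 4)]

section DivMap

variable {k : ℝ} {T : Icc (0 : ℝ) 1 → Icc (0 : ℝ) 1}

theorem dist_map_map_of_div (hk : 0 < k) (hT : ∀ x, (T x : ℝ) = x / k) (x y : Icc (0 : ℝ) 1) :
    dist (T x) (T y) = k⁻¹ * dist x y := by
  rw [Subtype.dist_eq, Subtype.dist_eq, Real.dist_eq, Real.dist_eq, hT, hT, ← sub_div, abs_div,
    abs_of_pos hk, div_eq_inv_mul]

theorem dist_self_map_of_div (hk : 1 ≤ k) (hT : ∀ x, (T x : ℝ) = x / k) (x : Icc (0 : ℝ) 1) :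
    dist x (T x) = (1 - k⁻¹) * x := by
  have : (1 : ℝ) - k⁻¹ ≥ 0 := sub_nonneg.2 (inv_le_one_of_one_le₀ hk)
  rw [Subtype.dist_eq, Real.dist_eq, hT, div_eq_mul_inv, ← mul_one_sub, mul_comm,
    abs_of_nonneg (mul_nonneg this x.2.1)]

theorem kannanPerimetricWith_of_div_iff (hk : 1 < k) (hT : ∀ x, (T x : ℝ) = x / k) (δ : ℝ) :
    KannanPerimetricWith δ T ↔ 2 ≤ δ * (k - 1) := by
  have hk₀ : 0 < k := by linarith
  have hreduce : ∀ p q r s : Icc (0 : ℝ) 1,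
      quadPerimeter (T p) (T q) (T r) (T s) ≤
          δ * (dist p (T p) + dist q (T q) + dist r (T r) + dist s (T s)) ↔
        quadPerimeter p q r s ≤ δ * (k - 1) * (p + q + r + s) := by
    intro p q r s
    rw [quadPerimeter_map_of_dist_eq (dist_map_map_of_div hk₀ hT), dist_self_map_of_div hk.le hT,
      dist_self_map_of_div hk.le hT, dist_self_map_of_div hk.le hT, dist_self_map_of_div hk.le hT,
      ← mul_le_mul_iff_of_pos_left hk₀]
    field_simp
  simp only [KannanPerimetricWith, hreduce]
  refine ⟨two_le_of_forall_quadPerimeter_le, fun h p q r s _ _ _ _ _ _ => ?_⟩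
  have hdist : ∀ x : Icc (0 : ℝ) 1, dist x ⟨0, by norm_num⟩ = x := fun x => by
    rw [Subtype.dist_eq, Real.dist_eq, sub_zero, abs_of_nonneg x.2.1]
  have hsum : (0 : ℝ) ≤ p + q + r + s := by linarith [p.2.1, q.2.1, r.2.1, s.2.1]
  calc quadPerimeter p q r s ≤ 2 * (p + q + r + s) := by
        simpa only [hdist] using quadPerimeter_le_two_mul ⟨0, by norm_num⟩ p q r s
    _ ≤ δ * (k - 1) * (p + q + r + s) := mul_le_mul_of_nonneg_right h hsum

end DivMap

theorem kannan_perimetric_quadrilaterals_div_iff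
    (k : ℝ) (hk : 1 < k)
    (T : Set.Icc (0:ℝ) 1 → Set.Icc (0:ℝ) 1)
    (hT : ∀ x : Set.Icc (0:ℝ) 1, (T x : ℝ) = (x : ℝ) / k) :
    (∃ δ : ℝ, 0 ≤ δ ∧ δ < 1/2 ∧ ∀ p q r s : Set.Icc (0:ℝ) 1,
      p ≠ q → p ≠ r → p ≠ s → q ≠ r → q ≠ s → r ≠ s →
      dist (T p) (T q) + dist (T q) (T r) + dist (T r) (T s) + dist (T s) (T p) ≤
        δ * (dist p (T p) + dist q (T q) + dist r (T r) + dist s (T s))) ↔ 5 < k := by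
  change (∃ δ : ℝ, 0 ≤ δ ∧ δ < 1 / 2 ∧ KannanPerimetricWith δ T) ↔ 5 < k
  simp only [kannanPerimetricWith_of_div_iff hk hT]
  constructor
  · rintro ⟨δ, -, hδ, h⟩
    nlinarith
  · intro hk5
    have hk₁ : 0 < k - 1 := by linarith
    refine ⟨2 / (k - 1), by positivity, by rw [div_lt_iff₀ hk₁]; linarith, ?_⟩
    rw [div_mul_cancel₀ _ hk₁.ne']
end

section
/- Let (M,d) be a metric space with at least four points and let T : M → M be a perimetric contraction on quadrilaterals with constant λ ∈ [0,1/8). Then T is a Chatterjea type perimetric contraction on quadrilaterals, with constant λ/(1−λ) ∈ [0,1/7). -/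
theorem perimetric_implies_chatterjea_perimetric_quadrilaterals
    {M : Type*} [MetricSpace M] (T : M → M)
    (hfour : ∃ a b c e : M, a ≠ b ∧ a ≠ c ∧ a ≠ e ∧ b ≠ c ∧ b ≠ e ∧ c ≠ e)
    (l : ℝ) (hl0 : 0 ≤ l) (hl1 : l < 1/8)
    (hT : ∀ p q r s : M, p ≠ q → p ≠ r → p ≠ s → q ≠ r → q ≠ s → r ≠ s →
      dist (T p) (T q) + dist (T q) (T r) + dist (T r) (T s) + dist (T s) (T p) ≤
        l * (dist p q + dist q r + dist r s + dist s p)) :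
    0 ≤ l / (1 - l) ∧ l / (1 - l) < 1/7 ∧ ∀ p q r s : M, p ≠ q → p ≠ r → p ≠ s → q ≠ r → q ≠ s → r ≠ s →
      dist (T p) (T q) + dist (T q) (T r) + dist (T r) (T s) + dist (T s) (T p) ≤
        (l / (1 - l)) * (dist p (T q) + dist p (T s) + dist q (T p) + dist q (T r) +
          dist r (T q) + dist r (T s) + dist s (T r) + dist s (T p)) := by
  have h1 : (0:ℝ) < 1 - l := by linarith
  refine ⟨div_nonneg hl0 h1.le, by rw [div_lt_iff₀ h1]; linarith, ?_⟩
  intro p q r s hpq hpr hps hqr hqs hrs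
  have key := hT p q r s hpq hpr hps hqr hqs hrs
  have t1 := dist_triangle4 p (T q) (T p) q
  have t2 := dist_triangle4 q (T r) (T q) r
  have t3 := dist_triangle4 r (T s) (T r) s
  have t4 := dist_triangle4 s (T p) (T s) p
  have hP : dist p q + dist q r + dist r s + dist s p ≤
      (dist p (T q) + dist p (T s) + dist q (T p) + dist q (T r) +
        dist r (T q) + dist r (T s) + dist s (T r) + dist s (T p)) +
      (dist (T p) (T q) + dist (T q) (T r) + dist (T r) (T s) + dist (T s) (T p)) := by
    rw [dist_comm (T q) (T p)] at t1
    rw [dist_comm (T r) (T q)] at t2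
    rw [dist_comm (T s) (T r)] at t3
    rw [dist_comm (T p) (T s)] at t4
    rw [dist_comm (T p) q] at t1
    rw [dist_comm (T q) r] at t2
    rw [dist_comm (T r) s] at t3
    rw [dist_comm (T s) p] at t4
    linarith
  rw [div_mul_eq_mul_div, le_div_iff₀ h1]
  nlinarith [mul_le_mul_of_nonneg_left hP hl0]
end

section
/- Let (M,d) be a complete metric space with at least four points and let T : M → M be a Chatterjea type perimetric contraction on quadrilaterals. If T has no periodic points of prime period 2 (i.e., T²m = m implies Tm = m for all m ∈ M) and no periodic points of prime period 3 (i.e., T³m = m implies Tm = m for all m ∈ M), then T has a fixed point in M. Moreover, T has at most three fixed points. -/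
theorem chatterjea_perimetric_quadrilaterals_fixed_point
    {M : Type*} [MetricSpace M] [CompleteSpace M] (T : M → M)
    (hfour : ∃ a b c e : M, a ≠ b ∧ a ≠ c ∧ a ≠ e ∧ b ≠ c ∧ b ≠ e ∧ c ≠ e)
    (hT : ∃ l : ℝ, 0 ≤ l ∧ l < 1/7 ∧ ∀ p q r s : M, p ≠ q → p ≠ r → p ≠ s → q ≠ r → q ≠ s → r ≠ s →
      dist (T p) (T q) + dist (T q) (T r) + dist (T r) (T s) + dist (T s) (T p) ≤
        l * (dist p (T q) + dist p (T s) + dist q (T p) + dist q (T r) +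
          dist r (T q) + dist r (T s) + dist s (T r) + dist s (T p)))
    (h2 : ∀ m : M, T (T m) = m → T m = m)
    (h3 : ∀ m : M, T (T (T m)) = m → T m = m) :
    (∃ m : M, T m = m) ∧
    ¬ ∃ p q r s : M, p ≠ q ∧ p ≠ r ∧ p ≠ s ∧ q ≠ r ∧ q ≠ s ∧ r ≠ s ∧
      T p = p ∧ T q = q ∧ T r = r ∧ T s = s := by
  obtain ⟨l, hl0, hl7, hcontr⟩ := hT
  constructor
  · -- existence of a fixed point
    obtain ⟨x₀, -⟩ := hfour
    set x : ℕ → M := fun n => T^[n] x₀ with hxdef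
    have hsucc : ∀ n, x (n + 1) = T (x n) := fun n => Function.iterate_succ_apply' T n x₀
    by_cases hA : ∃ n, T (x n) = x n
    · obtain ⟨n, hn⟩ := hA
      exact ⟨x n, hn⟩
    push_neg at hA
    -- pairwise distinctness along the orbit at gaps 1, 2, 3
    have hne1 : ∀ n, x n ≠ x (n + 1) := by
      intro n h
      exact hA n (by rw [← hsucc n, h])
    have hne2 : ∀ n, x n ≠ x (n + 2) := by
      intro n h
      apply hA n
      apply h2
      rw [← hsucc n, ← hsucc (n + 1)]
      exact h.symm
    have hne3 : ∀ n, x n ≠ x (n + 3) := by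
      intro n h
      apply hA n
      apply h3
      rw [← hsucc n, ← hsucc (n + 1), ← hsucc (n + 2)]
      exact h.symm
    set a : ℕ → ℝ := fun n => dist (x n) (x (n + 1)) with hadef
    have ha_nonneg : ∀ n, 0 ≤ a n := fun n => dist_nonneg
    have ha_pos : ∀ n, 0 < a n := fun n => dist_pos.mpr (hne1 n)
    set S : ℕ → ℝ := fun n => a n + a (n + 1) + a (n + 2) with hSdef
    have hS_nonneg : ∀ n, 0 ≤ S n := fun n => by
      have := ha_nonneg n; have := ha_nonneg (n + 1); have := ha_nonneg (n + 2)
      simp only [hSdef]; linarith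
    set c : ℝ := 2 * l / (1 - 4 * l) with hcdef
    have hden : (0:ℝ) < 1 - 4 * l := by linarith
    have hc0 : 0 ≤ c := div_nonneg (by linarith) (le_of_lt hden)
    have hc1 : c < 1 := by
      rw [hcdef, div_lt_one hden]; linarith
    -- the key contraction inequality for S
    have hkey : ∀ n, S (n + 1) ≤ c * S n := by
      intro n
      have hmain := hcontr (x n) (x (n + 1)) (x (n + 2)) (x (n + 3))
        (hne1 n) (hne2 n) (hne3 n) (hne1 (n + 1))
        (by have := hne2 (n + 1); simpa [show n + 1 + 2 = n + 3 by ring] using this)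
        (hne1 (n + 2))
      rw [← hsucc n, ← hsucc (n + 1), ← hsucc (n + 2), ← hsucc (n + 3)] at hmain
      have t1 : dist (x n) (x (n + 2)) ≤ a n + a (n + 1) := by
        simpa [hadef] using dist_triangle (x n) (x (n + 1)) (x (n + 2))
      have t2 : dist (x n) (x (n + 4)) ≤ a n + a (n + 1) + a (n + 2) + a (n + 3) := by
        calc dist (x n) (x (n + 4)) ≤
            dist (x n) (x (n + 1)) + dist (x (n + 1)) (x (n + 2)) + dist (x (n + 2)) (x (n + 3))
              + dist (x (n + 3)) (x (n + 4)) := by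
              have := dist_triangle4 (x n) (x (n + 1)) (x (n + 2)) (x (n + 3))
              have h4 := dist_triangle (x n) (x (n + 3)) (x (n + 4))
              linarith
          _ = a n + a (n + 1) + a (n + 2) + a (n + 3) := rfl
      have t3 : dist (x (n + 1)) (x (n + 3)) ≤ a (n + 1) + a (n + 2) := by
        have := dist_triangle (x (n + 1)) (x (n + 2)) (x (n + 3))
        simpa [hadef, show n + 1 + 1 = n + 2 by ring, show n + 2 + 1 = n + 3 by ring] using this
      have t4 : dist (x (n + 2)) (x (n + 4)) ≤ a (n + 2) + a (n + 3) := by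
        have := dist_triangle (x (n + 2)) (x (n + 3)) (x (n + 4))
        simpa [hadef, show n + 2 + 1 = n + 3 by ring, show n + 3 + 1 = n + 4 by ring] using this
      have e31 : dist (x (n + 3)) (x (n + 1)) = dist (x (n + 1)) (x (n + 3)) :=
        dist_comm _ _
      have hL1 : dist (x (n + 1)) (x (n + 2)) = a (n + 1) := rfl
      have hL2 : dist (x (n + 2)) (x (n + 3)) = a (n + 2) := rfl
      have hL3 : dist (x (n + 3)) (x (n + 4)) = a (n + 3) := rfl
      have h41 : 0 ≤ dist (x (n + 4)) (x (n + 1)) := dist_nonneg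
      have key : a (n + 1) + a (n + 2) + a (n + 3) ≤
          l * (2 * a n + 4 * a (n + 1) + 4 * a (n + 2) + 2 * a (n + 3)) := by
        simp only [dist_self] at hmain
        rw [hL1, hL2, hL3, e31] at hmain
        have hmul1 : l * dist (x n) (x (n + 2)) ≤ l * (a n + a (n + 1)) :=
          mul_le_mul_of_nonneg_left t1 hl0
        have hmul2 : l * dist (x n) (x (n + 4)) ≤
            l * (a n + a (n + 1) + a (n + 2) + a (n + 3)) :=
          mul_le_mul_of_nonneg_left t2 hl0
        have hmul3 : l * dist (x (n + 1)) (x (n + 3)) ≤ l * (a (n + 1) + a (n + 2)) :=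
          mul_le_mul_of_nonneg_left t3 hl0
        have hmul4 : l * dist (x (n + 2)) (x (n + 4)) ≤ l * (a (n + 2) + a (n + 3)) :=
          mul_le_mul_of_nonneg_left t4 hl0
        nlinarith [hmain]
      have hS1 : S (n + 1) = a (n + 1) + a (n + 2) + a (n + 3) := rfl
      rw [hS1, hcdef, div_mul_eq_mul_div, le_div_iff₀ hden]
      have han := ha_nonneg n
      have han1 := ha_nonneg (n + 1)
      have han2 := ha_nonneg (n + 2)
      have han3 := ha_nonneg (n + 3)
      simp only [hSdef]
      nlinarith
    -- geometric decay
    have hgeom : ∀ n, S n ≤ S 0 * c ^ n := by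
      intro n
      induction n with
      | zero => simp
      | succ k ih =>
        calc S (k + 1) ≤ c * S k := hkey k
          _ ≤ c * (S 0 * c ^ k) := mul_le_mul_of_nonneg_left ih hc0
          _ = S 0 * c ^ (k + 1) := by ring
    have hdista : ∀ n, dist (x n) (x (n + 1)) ≤ S 0 * c ^ n := by
      intro n
      have : a n ≤ S n := by
        have := ha_nonneg (n + 1); have := ha_nonneg (n + 2)
        simp only [hSdef]; linarith
      exact this.trans (hgeom n)
    have hcauchy : CauchySeq x := cauchySeq_of_le_geometric c (S 0) hc1 hdista
    obtain ⟨m, hm⟩ := cauchySeq_tendsto_of_complete hcauchy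
    -- a n tends to 0
    have hatend : Filter.Tendsto a Filter.atTop (nhds 0) := by
      have hgeo : Filter.Tendsto (fun n => S 0 * c ^ n) Filter.atTop (nhds 0) := by
        have := tendsto_pow_atTop_nhds_zero_of_lt_one hc0 hc1
        simpa using this.const_mul (S 0)
      refine squeeze_zero (fun n => ha_nonneg n) (fun n => ?_) hgeo
      exact hdista n
    -- the limit m appears at most once in the orbit
    have hunique : ∀ n k, n < k → x n = m → x k ≠ m := by
      intro n k hnk hxn hxk
      have hxkn : x k = x n := by rw [hxn, hxk]
      set p := k - n with hp
      have hp1 : 1 ≤ p := by omega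
      have hkp : k = n + p := by omega
      have hshift : ∀ i, x (n + p + i) = x (n + i) := by
        intro i
        induction i with
        | zero => simpa using (hkp ▸ hxkn)
        | succ j ih =>
          have e1 : n + p + (j + 1) = (n + p + j) + 1 := by ring
          have e2 : n + (j + 1) = (n + j) + 1 := by ring
          rw [e1, e2, hsucc, hsucc, ih]
      have hshift_a : ∀ j, a (n + p + j) = a (n + j) := by
        intro j
        simp only [hadef]
        rw [show n + p + j + 1 = n + p + (j + 1) by ring, hshift (j + 1), hshift j,
          show n + (j + 1) = n + j + 1 by ring]
      have hper : ∀ j, a (n + j * p) = a n := by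
        intro j
        induction j with
        | zero => simp
        | succ i ih =>
          rw [show n + (i + 1) * p = n + p + i * p by ring, hshift_a (i * p), ih]
      have hlt : ∀ᶠ j in Filter.atTop, a j < a n :=
        hatend.eventually (gt_mem_nhds (ha_pos n))
      obtain ⟨N, hN⟩ := Filter.eventually_atTop.mp hlt
      have := hN (n + N * p) (by nlinarith)
      rw [hper N] at this
      exact lt_irrefl _ this
    have hNe : ∃ N, ∀ k, N ≤ k → x k ≠ m := by
      by_cases hex : ∃ n, x n = m
      · obtain ⟨n, hn⟩ := hex
        exact ⟨n + 1, fun k hk => hunique n k (by omega) hn⟩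
      · push_neg at hex
        exact ⟨0, fun k _ => hex k⟩
    obtain ⟨N, hN⟩ := hNe
    -- pass to the limit in the contraction inequality to get T m = m
    refine ⟨m, ?_⟩
    have hx1 : Filter.Tendsto (fun n => x (n + 1)) Filter.atTop (nhds m) :=
      hm.comp (Filter.tendsto_add_atTop_nat 1)
    have hx2 : Filter.Tendsto (fun n => x (n + 2)) Filter.atTop (nhds m) :=
      hm.comp (Filter.tendsto_add_atTop_nat 2)
    have hx3 : Filter.Tendsto (fun n => x (n + 3)) Filter.atTop (nhds m) :=
      hm.comp (Filter.tendsto_add_atTop_nat 3)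
    have hTmconst : Filter.Tendsto (fun _ : ℕ => T m) Filter.atTop (nhds (T m)) :=
      tendsto_const_nhds
    have hmconst : Filter.Tendsto (fun _ : ℕ => m) Filter.atTop (nhds m) :=
      tendsto_const_nhds
    have hF : Filter.Tendsto (fun n =>
        dist (T m) (x (n + 1)) + dist (x (n + 1)) (x (n + 2)) +
        dist (x (n + 2)) (x (n + 3)) + dist (x (n + 3)) (T m)) Filter.atTop
        (nhds (dist (T m) m + dist m m + dist m m + dist m (T m))) :=
      (((hTmconst.dist hx1).add (hx1.dist hx2)).add (hx2.dist hx3)).add (hx3.dist hTmconst)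
    have hG : Filter.Tendsto (fun n =>
        l * (dist m (x (n + 1)) + dist m (x (n + 3)) + dist (x n) (T m) +
          dist (x n) (x (n + 2)) + dist (x (n + 1)) (x (n + 1)) +
          dist (x (n + 1)) (x (n + 3)) + dist (x (n + 2)) (x (n + 2)) +
          dist (x (n + 2)) (T m))) Filter.atTop
        (nhds (l * (dist m m + dist m m + dist m (T m) + dist m m + dist m m +
          dist m m + dist m m + dist m (T m)))) := by
      apply Filter.Tendsto.const_mul
      exact (((((((hmconst.dist hx1).add (hmconst.dist hx3)).add (hm.dist hTmconst)).add
        (hm.dist hx2)).add (hx1.dist hx1)).add (hx1.dist hx3)).add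
        (hx2.dist hx2)).add (hx2.dist hTmconst)
    have hineq : dist (T m) m + dist m m + dist m m + dist m (T m) ≤
        l * (dist m m + dist m m + dist m (T m) + dist m m + dist m m +
          dist m m + dist m m + dist m (T m)) := by
      refine le_of_tendsto_of_tendsto hF hG ?_
      rw [Filter.EventuallyLE, Filter.eventually_atTop]
      refine ⟨N, fun n hn => ?_⟩
      have hd1 : m ≠ x n := (hN n hn).symm
      have hd2 : m ≠ x (n + 1) := (hN (n + 1) (by omega)).symm
      have hd3 : m ≠ x (n + 2) := (hN (n + 2) (by omega)).symm
      have hmain := hcontr m (x n) (x (n + 1)) (x (n + 2)) hd1 hd2 hd3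
        (hne1 n) (hne2 n) (hne1 (n + 1))
      have E0 : T (x n) = x (n + 1) := (hsucc n).symm
      have E1 : T (x (n + 1)) = x (n + 2) := (hsucc (n + 1)).symm
      have E2 : T (x (n + 2)) = x (n + 3) := (hsucc (n + 2)).symm
      rw [E0, E1, E2] at hmain
      exact hmain
    simp only [dist_self] at hineq
    have hcm : dist m (T m) = dist (T m) m := dist_comm _ _
    have hd0 : 0 ≤ dist (T m) m := dist_nonneg
    have : dist (T m) m = 0 := by nlinarith
    exact (dist_eq_zero.mp this)
  · -- at most three fixed points
    rintro ⟨p, q, r, s, hpq, hpr, hps, hqr, hqs, hrs, fp, fq, fr, fs⟩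
    have hmain := hcontr p q r s hpq hpr hps hqr hqs hrs
    rw [fp, fq, fr, fs] at hmain
    have e1 : dist q p = dist p q := dist_comm _ _
    have e2 : dist r q = dist q r := dist_comm _ _
    have e3 : dist s r = dist r s := dist_comm _ _
    have e4 : dist p s = dist s p := dist_comm _ _
    have hpos : 0 < dist p q := dist_pos.mpr hpq
    have h1 : 0 ≤ dist q r := dist_nonneg
    have h2' : 0 ≤ dist r s := dist_nonneg
    have h3' : 0 ≤ dist s p := dist_nonneg
    nlinarith
end

section
/- Let (M,d) be a metric space with at least four points, let T : M → M be a Chatterjea type perimetric contraction on quadrilaterals with constant λ ∈ [0,1/7), and let a₀ ∈ M with Picard iterates aₙ₊₁ = T aₙ. If for some i the points aᵢ, aᵢ₊₁, aᵢ₊₂, aᵢ₊₃ are pairwise distinct, then d(aᵢ₊₃, aᵢ₊₄) ≤ (2λ/(1−λ))·( d(aᵢ,aᵢ₊₁) + d(aᵢ₊₁,aᵢ₊₂) + d(aᵢ₊₂,aᵢ₊₃) ). -/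
theorem chatterjea_perimetric_quadrilaterals_iterate_estimate
    {M : Type*} [MetricSpace M] (T : M → M)
    (hfour : ∃ a b c e : M, a ≠ b ∧ a ≠ c ∧ a ≠ e ∧ b ≠ c ∧ b ≠ e ∧ c ≠ e)
    (l : ℝ) (hl0 : 0 ≤ l) (hl1 : l < 1/7)
    (hT : ∀ p q r s : M, p ≠ q → p ≠ r → p ≠ s → q ≠ r → q ≠ s → r ≠ s →
      dist (T p) (T q) + dist (T q) (T r) + dist (T r) (T s) + dist (T s) (T p) ≤
        l * (dist p (T q) + dist p (T s) + dist q (T p) + dist q (T r) +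
          dist r (T q) + dist r (T s) + dist s (T r) + dist s (T p)))
    (a : ℕ → M) (ha : ∀ n : ℕ, a (n + 1) = T (a n)) (i : ℕ)
    (hdist : a i ≠ a (i + 1) ∧ a i ≠ a (i + 2) ∧ a i ≠ a (i + 3) ∧
      a (i + 1) ≠ a (i + 2) ∧ a (i + 1) ≠ a (i + 3) ∧ a (i + 2) ≠ a (i + 3)) :
    dist (a (i + 3)) (a (i + 4)) ≤
      (2 * l / (1 - l)) * (dist (a i) (a (i + 1)) + dist (a (i + 1)) (a (i + 2)) +
        dist (a (i + 2)) (a (i + 3))) := by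
  obtain ⟨h01, h02, h03, h12, h13, h23⟩ := hdist
  have key := hT (a i) (a (i + 1)) (a (i + 2)) (a (i + 3)) h01 h02 h03 h12 h13 h23
  have e1 : T (a i) = a (i + 1) := (ha i).symm
  have e2 : T (a (i + 1)) = a (i + 2) := (ha (i + 1)).symm
  have e3 : T (a (i + 2)) = a (i + 3) := (ha (i + 2)).symm
  have e4 : T (a (i + 3)) = a (i + 4) := (ha (i + 3)).symm
  rw [e1, e2, e3, e4] at key
  have t1 : dist (a i) (a (i + 2)) ≤ dist (a i) (a (i + 1)) + dist (a (i + 1)) (a (i + 2)) :=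
    dist_triangle _ _ _
  have t2 : dist (a i) (a (i + 4)) ≤ dist (a i) (a (i + 1)) + dist (a (i + 1)) (a (i + 4)) :=
    dist_triangle _ _ _
  have t3 : dist (a (i + 1)) (a (i + 3)) ≤
      dist (a (i + 1)) (a (i + 2)) + dist (a (i + 2)) (a (i + 3)) := dist_triangle _ _ _
  have t4 : dist (a (i + 2)) (a (i + 4)) ≤
      dist (a (i + 2)) (a (i + 3)) + dist (a (i + 3)) (a (i + 4)) := dist_triangle _ _ _
  have hself : ∀ x : M, dist x x = 0 := fun x => dist_self x
  rw [hself, hself, hself, dist_comm (a (i + 4)) (a (i + 1)),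
    dist_comm (a (i + 3)) (a (i + 1))] at key
  have hl : (0:ℝ) < 1 - l := by linarith
  rw [div_mul_eq_mul_div, le_div_iff₀ hl]
  have m1 := mul_le_mul_of_nonneg_left t1 hl0
  have m2 := mul_le_mul_of_nonneg_left t2 hl0
  have m3 := mul_le_mul_of_nonneg_left t3 hl0
  have m4 := mul_le_mul_of_nonneg_left t4 hl0
  have d12 : 0 ≤ dist (a (i + 1)) (a (i + 2)) := dist_nonneg
  have d23 : 0 ≤ dist (a (i + 2)) (a (i + 3)) := dist_nonneg
  have d14 : 0 ≤ dist (a (i + 1)) (a (i + 4)) := dist_nonneg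
  have p1 : 0 ≤ (1 - 3 * l) * dist (a (i + 1)) (a (i + 2)) :=
    mul_nonneg (by linarith) d12
  have p2 : 0 ≤ (1 - 3 * l) * dist (a (i + 2)) (a (i + 3)) :=
    mul_nonneg (by linarith) d23
  have p3 : 0 ≤ (1 - l) * dist (a (i + 1)) (a (i + 4)) :=
    mul_nonneg (by linarith) d14
  nlinarith [key, m1, m2, m3, m4, p1, p2, p3]
end

section
/- Let (M,d) be a complete metric space with at least four points and let T : M → M be a Chatterjea type perimetric contraction on quadrilaterals. If T has a fixed point in M, then T has no periodic points of prime period 3; that is, for every m ∈ M, T³m = m implies Tm = m. -/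
theorem chatterjea_perimetric_quadrilaterals_no_period_three
    {M : Type*} [MetricSpace M] [CompleteSpace M] (T : M → M)
    (hfour : ∃ a b c e : M, a ≠ b ∧ a ≠ c ∧ a ≠ e ∧ b ≠ c ∧ b ≠ e ∧ c ≠ e)
    (hT : ∃ l : ℝ, 0 ≤ l ∧ l < 1/7 ∧ ∀ p q r s : M, p ≠ q → p ≠ r → p ≠ s → q ≠ r → q ≠ s → r ≠ s →
      dist (T p) (T q) + dist (T q) (T r) + dist (T r) (T s) + dist (T s) (T p) ≤
        l * (dist p (T q) + dist p (T s) + dist q (T p) + dist q (T r) +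
          dist r (T q) + dist r (T s) + dist s (T r) + dist s (T p)))
    (hfix : ∃ m : M, T m = m) :
    ∀ m : M, T (T (T m)) = m → T m = m := by
  obtain ⟨l, hl0, hl7, hC⟩ := hT
  obtain ⟨z, hz⟩ := hfix
  intro m h3
  by_contra hne
  have h2 : T (T m) ≠ T m := by
    intro h
    have h' : T (T (T m)) = T (T m) := congrArg T h
    rw [h3] at h'
    exact hne (h'.trans h).symm
  have h2m : T (T m) ≠ m := by
    intro h
    have h' : T (T (T m)) = T m := congrArg T h
    rw [h3] at h'
    exact hne h'.symm
  have hzm : z ≠ m := by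
    intro h
    apply hne
    rw [← h]
    exact hz
  have hz1 : z ≠ T m := by
    intro h
    apply h2
    rw [← h]
    exact hz
  have hz2 : z ≠ T (T m) := by
    intro h
    have h' : T z = m := by rw [h]; exact h3
    rw [hz] at h'
    exact h2m ((h.symm.trans h').symm ▸ rfl : T (T m) = m)
  have i1 := hC z m (T m) (T (T m)) hzm hz1 hz2 (fun h => hne h.symm)
      (fun h => h2m h.symm) (fun h => h2 h.symm)
  have i2 := hC z (T m) (T (T m)) m hz1 hz2 hzm h2.symm
      (fun h => hne h) h2m
  have i3 := hC z (T (T m)) m (T m) hz2 hzm hz1 (fun h => h2m h)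
      (fun h => h2 h) (fun h => hne h.symm)
  rw [hz, h3] at i1 i2 i3
  simp only [dist_self] at i1 i2 i3
  have c1 : dist m z = dist z m := dist_comm _ _
  have c2 : dist (T m) z = dist z (T m) := dist_comm _ _
  have c3 : dist (T (T m)) z = dist z (T (T m)) := dist_comm _ _
  have c4 : dist (T m) m = dist m (T m) := dist_comm _ _
  have c5 : dist (T (T m)) (T m) = dist (T m) (T (T m)) := dist_comm _ _
  have c6 : dist m (T (T m)) = dist (T (T m)) m := dist_comm _ _
  have dA : 0 ≤ dist z m := dist_nonneg
  have dB : 0 ≤ dist z (T m) := dist_nonneg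
  have dCc : 0 ≤ dist z (T (T m)) := dist_nonneg
  have dX : 0 < dist m (T m) := dist_pos.mpr (fun h => hne h.symm)
  have dY : 0 ≤ dist (T m) (T (T m)) := dist_nonneg
  have dZ : 0 ≤ dist (T (T m)) m := dist_nonneg
  nlinarith [i1, i2, i3, mul_nonneg hl0 dA, mul_nonneg hl0 dB, mul_nonneg hl0 dCc,
    mul_nonneg hl0 dX.le, mul_nonneg hl0 dY, mul_nonneg hl0 dZ,
    mul_lt_mul_of_pos_right hl7 dX,
    mul_le_mul_of_nonneg_right hl7.le dA, mul_le_mul_of_nonneg_right hl7.le dB,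
    mul_le_mul_of_nonneg_right hl7.le dCc, mul_le_mul_of_nonneg_right hl7.le dY,
    mul_le_mul_of_nonneg_right hl7.le dZ]
end

section
/- Let (M,d) be a complete metric space with infinitely many points and let T : M → M be a Chatterjea type perimetric contraction on quadrilaterals. Let m₀ ∈ M and define the iterative sequence mₙ₊₁ = T mₙ. If the sequence (mₙ) converges to a point ξ ∈ M with ξ ≠ mₙ for all n ≥ 0, then ξ is the unique fixed point of T. -/
set_option maxHeartbeats 1000000


theorem chatterjea_perimetric_quadrilaterals_unique_fixed_point
    {M : Type*} [MetricSpace M] [CompleteSpace M] [Infinite M] (T : M → M)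
    (hT : ∃ l : ℝ, 0 ≤ l ∧ l < 1/7 ∧ ∀ p q r s : M, p ≠ q → p ≠ r → p ≠ s → q ≠ r → q ≠ s → r ≠ s →
      dist (T p) (T q) + dist (T q) (T r) + dist (T r) (T s) + dist (T s) (T p) ≤
        l * (dist p (T q) + dist p (T s) + dist q (T p) + dist q (T r) +
          dist r (T q) + dist r (T s) + dist s (T r) + dist s (T p)))
    (m : ℕ → M) (hm : ∀ n : ℕ, m (n + 1) = T (m n))
    (ξ : M) (hconv : Filter.Tendsto m Filter.atTop (nhds ξ))
    (hne : ∀ n : ℕ, ξ ≠ m n) :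
    T ξ = ξ ∧ ∀ η : M, T η = η → η = ξ := by
  obtain ⟨l, hl0, hl7, hl⟩ := hT
  have htend := Metric.tendsto_atTop.mp hconv
  -- three distinct points of the sequence with indices ≥ N
  have key : ∀ N : ℕ, ∃ a b c : ℕ, N ≤ a ∧ N ≤ b ∧ N ≤ c ∧
      m a ≠ m b ∧ m a ≠ m c ∧ m b ≠ m c := by
    intro N
    have ha : 0 < dist (m N) ξ := dist_pos.mpr (Ne.symm (hne N))
    obtain ⟨N1, hN1⟩ := htend _ ha
    set b := max N N1 with hbdef
    have hb : dist (m b) ξ < dist (m N) ξ := hN1 b (le_max_right _ _)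
    have hbpos : 0 < dist (m b) ξ := dist_pos.mpr (Ne.symm (hne b))
    obtain ⟨N2, hN2⟩ := htend _ hbpos
    set c := max N N2 with hcdef
    have hc : dist (m c) ξ < dist (m b) ξ := hN2 c (le_max_right _ _)
    refine ⟨N, b, c, le_refl _, le_max_left _ _, le_max_left _ _, ?_, ?_, ?_⟩
    · intro h; rw [h] at hb; exact lt_irrefl _ hb
    · intro h; rw [h] at hb; exact lt_irrefl _ (hc.trans hb)
    · intro h; rw [h] at hc; exact lt_irrefl _ hc
  -- fixed point
  have hfix : T ξ = ξ := by
    set D := dist (T ξ) ξ with hDdef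
    have hDnn : 0 ≤ D := dist_nonneg
    have main : ∀ ε : ℝ, 0 < ε → 2 * D * (1 - l) ≤ (12 * l + 2) * ε := by
      intro ε hε
      obtain ⟨N, hN⟩ := htend ε hε
      obtain ⟨a, b, c, haN, hbN, hcN, hab, hac, hbc⟩ := key N
      have hqr : m a ≠ m b := hab
      have spec := hl ξ (m a) (m b) (m c) (hne a) (hne b) (hne c) hab hac hbc
      rw [← hm a, ← hm b, ← hm c] at spec
      -- small distances
      have da : dist (m a) ξ < ε := hN a haN
      have db : dist (m b) ξ < ε := hN b hbN
      have dc : dist (m c) ξ < ε := hN c hcN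
      have da1 : dist (m (a+1)) ξ < ε := hN (a+1) (le_trans haN (Nat.le_succ a))
      have db1 : dist (m (b+1)) ξ < ε := hN (b+1) (le_trans hbN (Nat.le_succ b))
      have dc1 : dist (m (c+1)) ξ < ε := hN (c+1) (le_trans hcN (Nat.le_succ c))
      -- lower bounds for LHS
      have t1 : D ≤ dist (T ξ) (m (a+1)) + dist (m (a+1)) ξ := dist_triangle _ _ _
      have t2 : D ≤ dist (m (c+1)) (T ξ) + dist (m (c+1)) ξ := by
        rw [hDdef, dist_comm (T ξ) ξ]
        calc dist ξ (T ξ) ≤ dist ξ (m (c+1)) + dist (m (c+1)) (T ξ) := dist_triangle _ _ _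
          _ = dist (m (c+1)) (T ξ) + dist (m (c+1)) ξ := by rw [dist_comm ξ (m (c+1))]; ring
      have nn1 : 0 ≤ dist (m (a+1)) (m (b+1)) := dist_nonneg
      have nn2 : 0 ≤ dist (m (b+1)) (m (c+1)) := dist_nonneg
      -- upper bounds for RHS terms
      have r1 : dist ξ (m (a+1)) < ε := by rw [dist_comm]; exact da1
      have r2 : dist ξ (m (c+1)) < ε := by rw [dist_comm]; exact dc1
      have r3 : dist (m a) (T ξ) ≤ ε + D := by
        calc dist (m a) (T ξ) ≤ dist (m a) ξ + dist ξ (T ξ) := dist_triangle _ _ _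
          _ ≤ ε + D := by rw [dist_comm ξ (T ξ)]; linarith
      have r4 : dist (m c) (T ξ) ≤ ε + D := by
        calc dist (m c) (T ξ) ≤ dist (m c) ξ + dist ξ (T ξ) := dist_triangle _ _ _
          _ ≤ ε + D := by rw [dist_comm ξ (T ξ)]; linarith
      have mix : ∀ i j : ℕ, dist (m i) ξ < ε → dist (m j) ξ < ε →
          dist (m i) (m j) ≤ 2 * ε := by
        intro i j hi hj
        calc dist (m i) (m j) ≤ dist (m i) ξ + dist ξ (m j) := dist_triangle _ _ _
          _ ≤ 2 * ε := by rw [dist_comm ξ (m j)]; linarith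
      have r5 := mix a (b+1) da db1
      have r6 := mix b (a+1) db da1
      have r7 := mix b (c+1) db dc1
      have r8 := mix c (b+1) dc db1
      have rhs_bound : dist ξ (m (a+1)) + dist ξ (m (c+1)) + dist (m a) (T ξ) +
          dist (m a) (m (b+1)) + dist (m b) (m (a+1)) + dist (m b) (m (c+1)) +
          dist (m c) (m (b+1)) + dist (m c) (T ξ) ≤ 12 * ε + 2 * D := by linarith
      have rhs_bound' := mul_le_mul_of_nonneg_left rhs_bound hl0
      have step : 2 * D - 2 * ε ≤ l * (12 * ε + 2 * D) := by linarith
      nlinarith [step]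
    have hD0 : 2 * D * (1 - l) ≤ 0 := by
      by_contra h
      push_neg at h
      have hcoef : 0 < 12 * l + 2 := by linarith
      have := main ((2 * D * (1 - l)) / (2 * (12 * l + 2)))
        (by positivity)
      have h2 : (12 * l + 2) * ((2 * D * (1 - l)) / (2 * (12 * l + 2)))
          = (2 * D * (1 - l)) / 2 := by field_simp
      rw [h2] at this
      linarith
    have : D = 0 := by nlinarith
    exact dist_eq_zero.mp this
  refine ⟨hfix, ?_⟩
  intro η hη
  by_contra hηξ
  set E := dist ξ η with hEdef
  have hEpos : 0 < E := dist_pos.mpr (Ne.symm hηξ)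
  have main : ∀ ε : ℝ, 0 < ε → ε < E → 2 * E * (1 - 2 * l) ≤ (8 * l + 2) * ε := by
    intro ε hε hεE
    obtain ⟨N, hN⟩ := htend ε hε
    obtain ⟨a, b, c, haN, hbN, _, hab, _, _⟩ := key N
    have da : dist (m a) ξ < ε := hN a haN
    have db : dist (m b) ξ < ε := hN b hbN
    have da1 : dist (m (a+1)) ξ < ε := hN (a+1) (le_trans haN (Nat.le_succ a))
    have db1 : dist (m (b+1)) ξ < ε := hN (b+1) (le_trans hbN (Nat.le_succ b))
    have haη : m a ≠ η := by
      intro h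
      rw [dist_comm, ← h] at hEdef
      rw [hEdef] at hεE; linarith
    have hbη : m b ≠ η := by
      intro h
      rw [dist_comm, ← h] at hEdef
      rw [hEdef] at hεE; linarith
    have spec := hl ξ (m a) η (m b) (hne a) (fun h => hηξ h.symm) (hne b) haη hab (Ne.symm hbη)
    rw [← hm a, ← hm b, hfix, hη] at spec
    -- lower bounds on LHS
    have t1 : E ≤ dist (m (a+1)) η + ε := by
      have := dist_triangle ξ (m (a+1)) η
      rw [dist_comm ξ (m (a+1))] at this
      linarith
    have t2 : E ≤ dist η (m (b+1)) + ε := by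
      have h := dist_triangle ξ (m (b+1)) η
      rw [dist_comm ξ (m (b+1)), dist_comm (m (b+1)) η] at h
      linarith
    have nn1 : 0 ≤ dist ξ (m (a+1)) := dist_nonneg
    have nn2 : 0 ≤ dist (m (b+1)) ξ := dist_nonneg
    -- upper bounds on RHS
    have r1 : dist ξ (m (a+1)) < ε := by rw [dist_comm]; exact da1
    have r2 : dist ξ (m (b+1)) < ε := by rw [dist_comm]; exact db1
    have r3 : dist (m a) ξ < ε := da
    have r4 : dist (m a) η ≤ ε + E := by
      have := dist_triangle (m a) ξ η; linarith
    have r5 : dist η (m (a+1)) ≤ E + ε := by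
      have := dist_triangle η ξ (m (a+1))
      rw [dist_comm η ξ] at this
      rw [dist_comm ξ (m (a+1))] at this
      linarith
    have r6 : dist η (m (b+1)) ≤ E + ε := by
      have := dist_triangle η ξ (m (b+1))
      rw [dist_comm η ξ] at this
      rw [dist_comm ξ (m (b+1))] at this
      linarith
    have r7 : dist (m b) η ≤ ε + E := by
      have := dist_triangle (m b) ξ η; linarith
    have r8 : dist (m b) ξ < ε := db
    have rhs_bound : dist ξ (m (a+1)) + dist ξ (m (b+1)) + dist (m a) ξ +
        dist (m a) η + dist η (m (a+1)) + dist η (m (b+1)) + dist (m b) η +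
        dist (m b) ξ ≤ 8 * ε + 4 * E := by linarith
    have rhs_bound' := mul_le_mul_of_nonneg_left rhs_bound hl0
    have step : 2 * E - 2 * ε ≤ l * (8 * ε + 4 * E) := by linarith
    nlinarith [step]
  have hfinal : 2 * E * (1 - 2 * l) ≤ 0 := by
    by_contra h
    push_neg at h
    have hcoef : 0 < 8 * l + 2 := by linarith
    set ε := min (E / 2) ((2 * E * (1 - 2 * l)) / (2 * (8 * l + 2))) with hεdef
    have hεpos : 0 < ε := lt_min (by linarith) (by positivity)
    have hεE : ε < E := lt_of_le_of_lt (min_le_left _ _) (by linarith)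
    have := main ε hεpos hεE
    have hle : ε ≤ (2 * E * (1 - 2 * l)) / (2 * (8 * l + 2)) := min_le_right _ _
    have h2 : (8 * l + 2) * ((2 * E * (1 - 2 * l)) / (2 * (8 * l + 2)))
        = (2 * E * (1 - 2 * l)) / 2 := by field_simp
    have h3 : (8 * l + 2) * ε ≤ (2 * E * (1 - 2 * l)) / 2 := by
      calc (8 * l + 2) * ε ≤ (8 * l + 2) * ((2 * E * (1 - 2 * l)) / (2 * (8 * l + 2))) :=
        mul_le_mul_of_nonneg_left hle (by linarith)
        _ = (2 * E * (1 - 2 * l)) / 2 := h2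
    linarith
  nlinarith [mul_pos hEpos (show (0:ℝ) < 1 - 2*l by linarith)]
end
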